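/- arXiv:math/0701359 — 3 statements merged into one kernel-verified Lean document; each statement's English description precedes it below -/
import Mathlib

section
/- For an n-state ergodic Markov chain with transition matrix T and L = I - T, the mean first passage times satisfy m_{jj} = 1/π_j and, for i ≠ j, m_{ij} = (L^#_{jj} - L^#_{ij})/π_j, where π is the stationary distribution and L^# the group inverse of L. -/
open scoped Classical
open Finset Matrix

namespace MFPT

variable {n : ℕ}

/-- The step relation of a functional subgraph: `a → b` when `F a = some b`. -/
def Step (F : Fin n → Option (Fin n)) (a b : Fin n) : Prop := F a = some b

/-- `F` is a spanning in-forest of the weighted digraph with weight matrix `w`: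
every chosen arc is a genuine (loopless, positive-weight) arc and there is no directed cycle.
Each weak component of such a functional digraph is a converging tree (root = the vertex
mapped to `none`). -/
def IsInForest (w : Matrix (Fin n) (Fin n) ℝ) (F : Fin n → Option (Fin n)) : Prop :=
  (∀ v u, F v = some u → v ≠ u ∧ 0 < w v u) ∧ ∀ v, ¬ Relation.TransGen (Step F) v v

/-- Weight of a spanning subgraph: the product of its arc weights. -/
noncomputable def forestWeight (w : Matrix (Fin n) (Fin n) ℝ) (F : Fin n → Option (Fin n)) : ℝ :=
  ∏ v, (F v).elim 1 (fun u => w v u)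

/-- Number of arcs of a functional subgraph. -/
def arcCount (F : Fin n → Option (Fin n)) : ℕ :=
  (Finset.univ.filter fun v => (F v).isSome).card

/-- Vertex `i` belongs to the tree of `F` converging to (rooted at) `j`. -/
def InTreeOf (F : Fin n → Option (Fin n)) (i j : Fin n) : Prop :=
  Relation.ReflTransGen (Step F) i j ∧ F j = none

/-- `σ_k`: total weight of spanning in-forests with `k` arcs. -/
noncomputable def sigmaW (w : Matrix (Fin n) (Fin n) ℝ) (k : ℕ) : ℝ :=
  ∑ F : Fin n → Option (Fin n),
    if IsInForest w F ∧ arcCount F = k then forestWeight w F else 0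

/-- `Q_k`: the matrix whose `(i,j)` entry is the total weight of in-forests with `k` arcs
in which `i` belongs to the tree converging to `j`. -/
noncomputable def Qmat (w : Matrix (Fin n) (Fin n) ℝ) (k : ℕ) : Matrix (Fin n) (Fin n) ℝ :=
  Matrix.of fun i j => ∑ F : Fin n → Option (Fin n),
    if IsInForest w F ∧ arcCount F = k ∧ InTreeOf F i j then forestWeight w F else 0

/-- `q_j`: total weight of spanning trees converging to `j` (in-forests with `n-1` arcs
whose unique root is `j`). -/
noncomputable def treeWeight (w : Matrix (Fin n) (Fin n) ℝ) (j : Fin n) : ℝ :=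
  ∑ F : Fin n → Option (Fin n),
    if IsInForest w F ∧ arcCount F = n - 1 ∧ F j = none then forestWeight w F else 0

/-- `f_{ij}`: total weight of 2-tree in-forests having one tree containing `i` and the other
tree converging to `j`. -/
noncomputable def fWeight (w : Matrix (Fin n) (Fin n) ℝ) (i j : Fin n) : ℝ :=
  ∑ F : Fin n → Option (Fin n),
    if IsInForest w F ∧ arcCount F = n - 2 ∧ F j = none ∧
        ¬ Relation.ReflTransGen (Step F) i j
      then forestWeight w F else 0

/-- The Laplacian matrix of the weighted digraph with weight matrix `w`. -/
noncomputable def lap (w : Matrix (Fin n) (Fin n) ℝ) : Matrix (Fin n) (Fin n) ℝ :=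
  Matrix.of fun i j => if i = j then ∑ k ∈ Finset.univ.erase i, w i k else - w i j

/-- `X` is the group inverse of `L`. -/
def IsGroupInverse (L X : Matrix (Fin n) (Fin n) ℝ) : Prop :=
  L * X * L = L ∧ X * L * X = X ∧ L * X = X * L

/-- `T` is (row-)stochastic. -/
def IsStochastic (T : Matrix (Fin n) (Fin n) ℝ) : Prop :=
  (∀ i j, 0 ≤ T i j) ∧ ∀ i, ∑ j, T i j = 1

/-- Irreducibility of `T`. -/
def IsIrreducible (T : Matrix (Fin n) (Fin n) ℝ) : Prop :=
  ∀ i j, ∃ k : ℕ, 0 < (T ^ k) i j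

/-- Ergodicity (primitivity) of `T`: some power of `T` is entrywise positive. -/
def IsErgodic (T : Matrix (Fin n) (Fin n) ℝ) : Prop :=
  ∃ N : ℕ, ∀ i j, 0 < (T ^ N) i j

/-- `π` is a stationary distribution of `T`. -/
def IsStationary (T : Matrix (Fin n) (Fin n) ℝ) (π : Fin n → ℝ) : Prop :=
  (∀ i, 0 ≤ π i) ∧ (∑ i, π i = 1) ∧ ∀ j, ∑ i, π i * T i j = π j

/-- Probability of the trajectory `p` of length `k` under transition matrix `T`. -/
noncomputable def pathProb (T : Matrix (Fin n) (Fin n) ℝ) (k : ℕ)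
    (p : Fin (k + 1) → Fin n) : ℝ :=
  ∏ t : Fin k, T (p t.castSucc) (p t.succ)

/-- `Pr(F_{ij} = k)`: probability that, starting at `i`, the chain first reaches `j`
(at a step `p ≥ 1`) exactly at time `k`. -/
noncomputable def firstPassageProb (T : Matrix (Fin n) (Fin n) ℝ) (i j : Fin n) (k : ℕ) : ℝ :=
  ∑ p : Fin (k + 1) → Fin n,
    if p 0 = i ∧ p (Fin.last k) = j ∧
        (∀ t : Fin (k + 1), t ≠ 0 → t ≠ Fin.last k → p t ≠ j)
      then pathProb T k p else 0

/-- Mean first passage time `m_{ij} = E F_{ij} = ∑ k k·Pr(F_{ij}=k)`. -/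
noncomputable def mfpt (T : Matrix (Fin n) (Fin n) ℝ) (i j : Fin n) : ℝ :=
  ∑' k : ℕ, (k : ℝ) * firstPassageProb T i j k

end MFPT

namespace MFPT

variable {n : ℕ}

lemma isStochastic_mul {T S : Matrix (Fin n) (Fin n) ℝ}
    (hT : IsStochastic T) (hS : IsStochastic S) : IsStochastic (T * S) := by
  constructor
  · intro i j
    rw [Matrix.mul_apply]
    exact Finset.sum_nonneg fun l _ => mul_nonneg (hT.1 i l) (hS.1 l j)
  · intro i
    simp only [Matrix.mul_apply]
    rw [Finset.sum_comm]
    simp [← Finset.mul_sum, hS.2, hT.2 i]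

lemma isStochastic_pow {T : Matrix (Fin n) (Fin n) ℝ}
    (hT : IsStochastic T) (k : ℕ) : IsStochastic (T ^ k) := by
  induction k with
  | zero =>
    constructor
    · intro i j
      by_cases h : i = j <;> simp [pow_zero, Matrix.one_apply, h]
    · intro i; simp [pow_zero, Matrix.one_apply]
  | succ k ih => rw [pow_succ]; exact isStochastic_mul ih hT

lemma exists_pos_pow {T : Matrix (Fin n) (Fin n) ℝ}
    (hT : IsStochastic T) (hE : IsErgodic T) :
    ∃ N, 1 ≤ N ∧ ∀ i j, 0 < (T ^ N) i j := by
  obtain ⟨N, hN⟩ := hE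
  rcases Nat.eq_zero_or_pos N with h0 | hpos
  · subst h0
    refine ⟨1, le_refl 1, fun i j => ?_⟩
    have hsub : ∀ a b : Fin n, a = b := by
      intro a b
      by_contra hab
      have := hN a b
      simp [pow_zero, Matrix.one_apply, hab] at this
    haveI : Subsingleton (Fin n) := ⟨hsub⟩
    have hrow := hT.2 i
    rw [Fintype.sum_subsingleton _ j] at hrow
    rw [pow_one, hrow]; exact one_pos
  · exact ⟨N, hpos, hN⟩

lemma kernel_const {T : Matrix (Fin n) (Fin n) ℝ} (hT : IsStochastic T)
    {N : ℕ} (hN : ∀ i j, 0 < (T ^ N) i j) {v : Fin n → ℝ}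
    (hv : ∀ i, ∑ l, T i l * v l = v i) : ∀ a b, v a = v b := by
  have hvk : ∀ k i, ∑ l, (T ^ k) i l * v l = v i := by
    intro k
    induction k with
    | zero => intro i; simp [pow_zero, Matrix.one_apply, ite_mul]
    | succ k ih =>
      intro i
      rw [pow_succ']
      simp only [Matrix.mul_apply, Finset.sum_mul]
      rw [Finset.sum_comm]
      simp only [mul_assoc, ← Finset.mul_sum]
      calc ∑ m, T i m * ∑ l, (T ^ k) m l * v l = ∑ m, T i m * v m := by
            refine Finset.sum_congr rfl fun m _ => ?_; rw [ih m]
        _ = v i := hv i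
  intro a b
  have hne : (Finset.univ : Finset (Fin n)).Nonempty := ⟨a, Finset.mem_univ a⟩
  obtain ⟨i0, -, hmax⟩ := Finset.exists_max_image Finset.univ v hne
  have key : ∀ c, v c = v i0 := by
    intro c
    have hrow := (isStochastic_pow hT N).2 i0
    have hsum0 : ∑ l, (T ^ N) i0 l * (v i0 - v l) = 0 := by
      simp only [mul_sub, Finset.sum_sub_distrib, hvk N i0, ← Finset.sum_mul, hrow]
      ring
    have hterm : ∀ l ∈ Finset.univ, (0:ℝ) ≤ (T ^ N) i0 l * (v i0 - v l) :=
      fun l _ => mul_nonneg (hN i0 l).le (sub_nonneg.2 (hmax l (Finset.mem_univ l)))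
    have := (Finset.sum_eq_zero_iff_of_nonneg hterm).1 hsum0 c (Finset.mem_univ c)
    have hc := (mul_eq_zero.1 this).resolve_left (hN i0 c).ne'
    linarith [sub_eq_zero.1 hc]
  rw [key a, key b]

lemma stationary_pow {T : Matrix (Fin n) (Fin n) ℝ} {π : Fin n → ℝ}
    (hπ : ∀ j, ∑ i, π i * T i j = π j) (k : ℕ) :
    ∀ j, ∑ i, π i * (T ^ k) i j = π j := by
  induction k with
  | zero => intro j; simp [pow_zero, Matrix.one_apply, mul_ite]
  | succ k ih =>
    intro j
    rw [pow_succ]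
    simp only [Matrix.mul_apply, Finset.mul_sum]
    rw [Finset.sum_comm]
    calc ∑ m, ∑ i, π i * ((T ^ k) i m * T m j)
        = ∑ m, (∑ i, π i * (T ^ k) i m) * T m j := by
          refine Finset.sum_congr rfl fun m _ => ?_
          rw [Finset.sum_mul]; exact Finset.sum_congr rfl fun i _ => by ring
      _ = ∑ m, π m * T m j := by
          refine Finset.sum_congr rfl fun m _ => ?_; rw [ih m]
      _ = π j := hπ j

lemma pi_pos {T : Matrix (Fin n) (Fin n) ℝ} {π : Fin n → ℝ}
    (hT : IsStochastic T) (hE : IsErgodic T) (hπ : IsStationary T π) (j : Fin n) :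
    0 < π j := by
  obtain ⟨N, -, hN⟩ := exists_pos_pow hT hE
  obtain ⟨i1, hi1⟩ : ∃ i, 0 < π i := by
    by_contra h
    push_neg at h
    have : ∀ i, π i = 0 := fun i => le_antisymm (h i) (hπ.1 i)
    have h1 := hπ.2.1
    rw [Finset.sum_congr rfl fun i _ => this i] at h1
    simp at h1
  have hs := stationary_pow hπ.2.2 N j
  have : π i1 * (T ^ N) i1 j ≤ ∑ i, π i * (T ^ N) i j :=
    Finset.single_le_sum (fun i _ => mul_nonneg (hπ.1 i) (hN i j).le) (Finset.mem_univ i1)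
  rw [hs] at this
  exact lt_of_lt_of_le (mul_pos hi1 (hN i1 j)) this


/-- `T` with column `j` zeroed out. -/
noncomputable def subT (T : Matrix (Fin n) (Fin n) ℝ) (j : Fin n) :
    Matrix (Fin n) (Fin n) ℝ :=
  Matrix.of fun i l => if l = j then 0 else T i l

/-- probability of avoiding `j` during the first `k` steps, starting from `i`. -/
noncomputable def avoid (T : Matrix (Fin n) (Fin n) ℝ) (j : Fin n) (k : ℕ) (i : Fin n) : ℝ :=
  ∑ l, ((subT T j) ^ k) i l

variable {T : Matrix (Fin n) (Fin n) ℝ} {j : Fin n}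

lemma subT_apply (i l : Fin n) : subT T j i l = if l = j then 0 else T i l := rfl

lemma subT_nonneg (hT : IsStochastic T) (i l : Fin n) : 0 ≤ subT T j i l := by
  rw [subT_apply]; split <;> [exact le_refl 0; exact hT.1 i l]

lemma subT_pow_nonneg (hT : IsStochastic T) (k : ℕ) (i l : Fin n) :
    0 ≤ ((subT T j) ^ k) i l := by
  induction k generalizing i l with
  | zero => rw [pow_zero, Matrix.one_apply]; split <;> norm_num
  | succ k ih =>
    rw [pow_succ, Matrix.mul_apply]
    exact Finset.sum_nonneg fun m _ => mul_nonneg (ih i m) (subT_nonneg hT m l)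

lemma avoid_nonneg (hT : IsStochastic T) (k : ℕ) (i : Fin n) : 0 ≤ avoid T j k i :=
  Finset.sum_nonneg fun l _ => subT_pow_nonneg hT k i l

lemma avoid_zero (i : Fin n) : avoid T j 0 i = 1 := by
  simp [avoid, pow_zero, Matrix.one_apply]

lemma sum_subT_mul (x : Fin n → ℝ) (i : Fin n) :
    ∑ m, subT T j i m * x m = ∑ m ∈ Finset.univ.erase j, T i m * x m := by
  rw [← Finset.sum_erase_add Finset.univ _ (Finset.mem_univ j)]
  rw [subT_apply, if_pos rfl, zero_mul, add_zero]
  refine Finset.sum_congr rfl fun m hm => ?_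
  rw [subT_apply, if_neg (Finset.ne_of_mem_erase hm)]

lemma avoid_succ (k : ℕ) (i : Fin n) :
    avoid T j (k + 1) i = ∑ l ∈ Finset.univ.erase j, T i l * avoid T j k l := by
  rw [← sum_subT_mul]
  unfold avoid
  rw [pow_succ']
  simp only [Matrix.mul_apply]
  rw [Finset.sum_comm]
  exact Finset.sum_congr rfl fun m _ => by rw [Finset.mul_sum]

lemma avoid_add (k k' : ℕ) (i : Fin n) :
    avoid T j (k + k') i = ∑ m, ((subT T j) ^ k) i m * avoid T j k' m := by
  unfold avoid
  rw [pow_add]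
  simp only [Matrix.mul_apply]
  rw [Finset.sum_comm]
  exact Finset.sum_congr rfl fun m _ => by rw [Finset.mul_sum]

lemma avoid_succ_le (hT : IsStochastic T) (k : ℕ) (i : Fin n) :
    avoid T j (k + 1) i ≤ avoid T j k i := by
  induction k generalizing i with
  | zero =>
    rw [avoid_succ, avoid_zero]
    calc ∑ l ∈ Finset.univ.erase j, T i l * avoid T j 0 l
        = ∑ l ∈ Finset.univ.erase j, T i l := by
          refine Finset.sum_congr rfl fun l _ => by rw [avoid_zero, mul_one]
      _ ≤ ∑ l, T i l := Finset.sum_le_sum_of_subset_of_nonneg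
          (Finset.erase_subset j Finset.univ) (fun l _ _ => hT.1 i l)
      _ = 1 := hT.2 i
  | succ k ih =>
    rw [avoid_succ, avoid_succ]
    exact Finset.sum_le_sum fun l _ =>
      mul_le_mul_of_nonneg_left (ih l) (hT.1 i l)

lemma avoid_antitone (hT : IsStochastic T) (i : Fin n) :
    Antitone fun k => avoid T j k i :=
  antitone_nat_of_succ_le fun k => avoid_succ_le hT k i

lemma avoid_le_one (hT : IsStochastic T) (k : ℕ) (i : Fin n) : avoid T j k i ≤ 1 := by
  have h := avoid_antitone (j := j) hT i (Nat.zero_le k)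
  simpa [avoid_zero] using h

lemma entry_le_one {M : Matrix (Fin n) (Fin n) ℝ} (hM : IsStochastic M) (a b : Fin n) :
    M a b ≤ 1 := by
  have h := Finset.single_le_sum (fun l (_ : l ∈ Finset.univ) => hM.1 a l) (Finset.mem_univ b)
  rw [hM.2 a] at h; exact h

lemma isStochastic_mul' {T S : Matrix (Fin n) (Fin n) ℝ}
    (hT : IsStochastic T) (hS : IsStochastic S) : IsStochastic (T * S) := by
  constructor
  · intro i j
    rw [Matrix.mul_apply]
    exact Finset.sum_nonneg fun l _ => mul_nonneg (hT.1 i l) (hS.1 l j)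
  · intro i
    simp only [Matrix.mul_apply]
    rw [Finset.sum_comm]
    simp [← Finset.mul_sum, hS.2, hT.2 i]

lemma isStochastic_pow' {T : Matrix (Fin n) (Fin n) ℝ}
    (hT : IsStochastic T) (k : ℕ) : IsStochastic (T ^ k) := by
  induction k with
  | zero =>
    constructor
    · intro i j
      by_cases h : i = j <;> simp [pow_zero, Matrix.one_apply, h]
    · intro i; simp [pow_zero, Matrix.one_apply]
  | succ k ih => rw [pow_succ]; exact isStochastic_mul' ih hT

/-- avoidance + hitting bound: for `k ≥ 1`, `(T^k) i j + avoid k i ≤ 1`. -/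
lemma avoid_hit_bound (hT : IsStochastic T) (k : ℕ) (i : Fin n) :
    (T ^ (k + 1)) i j + avoid T j (k + 1) i ≤ 1 := by
  induction k generalizing i with
  | zero =>
    rw [pow_one, avoid_succ]
    calc T i j + ∑ l ∈ Finset.univ.erase j, T i l * avoid T j 0 l
        = T i j + ∑ l ∈ Finset.univ.erase j, T i l := by
          congr 1
          exact Finset.sum_congr rfl fun l _ => by rw [avoid_zero, mul_one]
      _ = ∑ l, T i l := by
          rw [add_comm, Finset.sum_erase_add Finset.univ _ (Finset.mem_univ j)]
      _ ≤ 1 := le_of_eq (hT.2 i)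
  | succ k ih =>
    rw [pow_succ', avoid_succ]
    rw [Matrix.mul_apply]
    have hsplit : ∑ l ∈ Finset.univ.erase j, T i l * avoid T j (k+1) l
        = ∑ l, T i l * (if l = j then 0 else avoid T j (k+1) l) := by
      rw [← Finset.sum_erase_add Finset.univ _ (Finset.mem_univ j), if_pos rfl,
        mul_zero, add_zero]
      exact Finset.sum_congr rfl fun l hl => by
        rw [if_neg (Finset.ne_of_mem_erase hl)]
    rw [hsplit, ← Finset.sum_add_distrib]
    calc ∑ l, (T i l * (T ^ (k+1)) l j + T i l * (if l = j then 0 else avoid T j (k+1) l))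
        ≤ ∑ l, T i l := by
          refine Finset.sum_le_sum fun l _ => ?_
          rw [← mul_add]
          by_cases hl : l = j
          · rw [if_pos hl, add_zero]
            calc T i l * (T ^ (k+1)) l j ≤ T i l * 1 :=
                  mul_le_mul_of_nonneg_left (entry_le_one (isStochastic_pow' hT (k+1)) l j) (hT.1 i l)
              _ = T i l := mul_one _
          · rw [if_neg hl]
            calc T i l * ((T ^ (k+1)) l j + avoid T j (k+1) l) ≤ T i l * 1 :=
                  mul_le_mul_of_nonneg_left (ih l) (hT.1 i l)
              _ = T i l := mul_one _
      _ = 1 := hT.2 i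

/-- Geometric decay along multiples of `N`. -/
lemma avoid_mul_le (hT : IsStochastic T) {N : ℕ} (hN1 : 1 ≤ N)
    (hN : ∀ i, 0 < (T ^ N) i j) {r : ℝ} (hr0 : 0 ≤ r)
    (hr : ∀ i, avoid T j N i ≤ r) (q : ℕ) (i : Fin n) :
    avoid T j (q * N) i ≤ r ^ q := by
  induction q generalizing i with
  | zero => simp [avoid_zero]
  | succ q ih =>
    have hq : (q + 1) * N = N + q * N := by ring
    rw [hq, avoid_add]
    calc ∑ m, ((subT T j) ^ N) i m * avoid T j (q * N) m
        ≤ ∑ m, ((subT T j) ^ N) i m * r ^ q := by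
          refine Finset.sum_le_sum fun m _ => ?_
          exact mul_le_mul_of_nonneg_left (ih m) (subT_pow_nonneg hT N i m)
      _ = avoid T j N i * r ^ q := by rw [← Finset.sum_mul]; rfl
      _ ≤ r * r ^ q := mul_le_mul_of_nonneg_right (hr i) (pow_nonneg hr0 q)
      _ = r ^ (q + 1) := by rw [pow_succ]; ring

/-- The master geometric bound: there exist `C ≥ 0` and `0 < ρ < 1` with
`avoid T j k i ≤ C * ρ ^ k`. -/
lemma avoid_geom_bound (hT : IsStochastic T) {N : ℕ} (hN1 : 1 ≤ N)
    (hN : ∀ i j', 0 < (T ^ N) i j') :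
    ∃ C ρ : ℝ, 0 < ρ ∧ ρ < 1 ∧ 0 ≤ C ∧ ∀ k i, avoid T j k i ≤ C * ρ ^ k := by
  have hne : (Finset.univ : Finset (Fin n)).Nonempty := ⟨j, Finset.mem_univ j⟩
  set ε : ℝ := Finset.univ.inf' hne (fun i => (T ^ N) i j) with hε
  obtain ⟨i0, -, hi0⟩ := Finset.exists_mem_eq_inf' hne (fun i => (T ^ N) i j)
  have hε0 : 0 < ε := by rw [hε, hi0]; exact hN i0 j
  have hε1 : ε ≤ 1 := by rw [hε, hi0]; exact entry_le_one (isStochastic_pow' hT N) i0 j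
  set r : ℝ := max (1 - ε) (1/2) with hrdef
  have hr0 : (1:ℝ)/2 ≤ r := le_max_right _ _
  have hr1 : r < 1 := by
    rw [hrdef]
    apply max_lt <;> linarith
  have hrpos : 0 < r := lt_of_lt_of_le (by norm_num) hr0
  have havN : ∀ i, avoid T j N i ≤ r := by
    intro i
    have h1 : (T ^ N) i j + avoid T j N i ≤ 1 := by
      obtain ⟨N', rfl⟩ := Nat.exists_eq_add_of_le hN1
      have := avoid_hit_bound (j := j) hT N' i
      convert this using 3 <;> omega
    have h2 : ε ≤ (T ^ N) i j := Finset.inf'_le _ (Finset.mem_univ i)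
    calc avoid T j N i ≤ 1 - ε := by linarith
      _ ≤ r := le_max_left _ _
  set ρ : ℝ := r ^ ((N:ℝ)⁻¹) with hρdef
  have hNR : (0:ℝ) < N := by exact_mod_cast hN1
  have hρ0 : 0 < ρ := Real.rpow_pos_of_pos hrpos _
  have hρ1 : ρ < 1 := Real.rpow_lt_one hrpos.le hr1 (by positivity)
  refine ⟨2, ρ, hρ0, hρ1, by norm_num, fun k i => ?_⟩
  have hdiv : avoid T j k i ≤ r ^ (k / N) := by
    calc avoid T j k i ≤ avoid T j ((k / N) * N) i :=
          avoid_antitone hT i (Nat.div_mul_le_self k N)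
      _ ≤ r ^ (k / N) := avoid_mul_le hT hN1 (fun i' => hN i' j) hrpos.le havN _ i
  have hexp : ((k:ℝ)/N - 1) ≤ ((k / N : ℕ) : ℝ) := by
    have hmod : k < N * (k / N) + N := by
      have := Nat.div_add_mod k N
      have := Nat.mod_lt k (show 0 < N by omega)
      omega
    have : (k:ℝ) < N * ((k / N : ℕ) : ℝ) + N := by exact_mod_cast hmod
    rw [div_sub_one hNR.ne', div_le_iff₀ hNR]
    nlinarith
  have hpow : r ^ (k / N) ≤ 2 * ρ ^ k := by
    have h1 : r ^ (k / N) = r ^ (((k / N : ℕ) : ℝ)) := by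
      rw [Real.rpow_natCast]
    have h2 : r ^ (((k / N : ℕ) : ℝ)) ≤ r ^ ((k:ℝ)/N - 1) :=
      Real.rpow_le_rpow_of_exponent_ge hrpos hr1.le hexp
    have h3 : r ^ ((k:ℝ)/N - 1) = ρ ^ k / r := by
      rw [Real.rpow_sub hrpos, Real.rpow_one]
      congr 1
      rw [hρdef, ← Real.rpow_natCast (r ^ ((N:ℝ)⁻¹)) k, ← Real.rpow_mul hrpos.le]
      congr 1
      field_simp
    have h4 : ρ ^ k / r ≤ 2 * ρ ^ k := by
      rw [div_le_iff₀ hrpos]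
      have hρk : 0 ≤ ρ ^ k := (pow_pos hρ0 k).le
      nlinarith
    calc r ^ (k / N) = r ^ (((k / N : ℕ) : ℝ)) := h1
      _ ≤ r ^ ((k:ℝ)/N - 1) := h2
      _ = ρ ^ k / r := h3
      _ ≤ 2 * ρ ^ k := h4
  linarith


/-- Column `j` of the projection `1 - L X` is constant `π j`. -/
lemma proj_col {T X : Matrix (Fin n) (Fin n) ℝ} {π : Fin n → ℝ}
    (hT : IsStochastic T) {N : ℕ} (hN : ∀ i j, 0 < (T ^ N) i j)
    (hπ1 : ∑ i, π i = 1) (hπ2 : ∀ j, ∑ i, π i * T i j = π j)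
    (hL : IsGroupInverse (1 - T) X) (j : Fin n) :
    ∀ i, (if i = j then (1:ℝ) else 0) - ((1 - T) * X) i j = π j := by
  set L : Matrix (Fin n) (Fin n) ℝ := 1 - T with hLdef
  have h1 : L * (L * X) = L := by
    calc L * (L * X) = L * (X * L) := by rw [hL.2.2]
      _ = L * X * L := by rw [mul_assoc]
      _ = L := hL.1
  set P : Matrix (Fin n) (Fin n) ℝ := 1 - L * X with hPdef
  have h0 : L * P = 0 := by
    rw [hPdef, mul_sub, mul_one, h1, sub_self]
  set w : Fin n → ℝ := fun i => P i j with hwdef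
  have hL_apply : ∀ i m, L i m = (if i = m then (1:ℝ) else 0) - T i m := by
    intro i m
    simp [hLdef, Matrix.sub_apply, Matrix.one_apply]
  have hw : ∀ i, ∑ l, T i l * w l = w i := by
    intro i
    have := congrFun (congrFun h0 i) j
    rw [Matrix.mul_apply] at this
    have hexp : ∑ m, L i m * P m j
        = w i - ∑ m, T i m * w m := by
      calc ∑ m, L i m * P m j
          = ∑ m, ((if i = m then (1:ℝ) else 0) * P m j - T i m * P m j) := by
            refine Finset.sum_congr rfl fun m _ => ?_
            rw [hL_apply i m, sub_mul]
        _ = (∑ m, (if i = m then (1:ℝ) else 0) * P m j) - ∑ m, T i m * P m j := by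
            rw [Finset.sum_sub_distrib]
        _ = w i - ∑ m, T i m * w m := by
            simp [ite_mul, hwdef]
    rw [hexp] at this
    have : w i - ∑ m, T i m * w m = 0 := by simpa using this
    linarith [this]
  have hconst := kernel_const hT hN hw
  -- value via π
  have hPval : ∑ i, π i * w i = π j := by
    have hLXsum : ∑ i, π i * (L * X) i j = 0 := by
      have : ∀ i, (L * X) i j = ∑ m, L i m * X m j := fun i => Matrix.mul_apply
      calc ∑ i, π i * (L * X) i j = ∑ i, ∑ m, π i * (L i m * X m j) := by
            refine Finset.sum_congr rfl fun i _ => ?_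
            rw [this i, Finset.mul_sum]
        _ = ∑ m, (∑ i, π i * L i m) * X m j := by
            rw [Finset.sum_comm]
            refine Finset.sum_congr rfl fun m _ => ?_
            rw [Finset.sum_mul]
            exact Finset.sum_congr rfl fun i _ => by ring
        _ = 0 := by
            refine Finset.sum_eq_zero fun m _ => ?_
            have : ∑ i, π i * L i m = 0 := by
              calc ∑ i, π i * L i m
                  = ∑ i, (π i * (if i = m then (1:ℝ) else 0) - π i * T i m) := by
                    refine Finset.sum_congr rfl fun i _ => ?_
                    rw [hL_apply i m]; ring
                _ = (∑ i, π i * (if i = m then (1:ℝ) else 0)) - ∑ i, π i * T i m := by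
                    rw [Finset.sum_sub_distrib]
                _ = π m - π m := by rw [hπ2 m]; simp [mul_ite]
                _ = 0 := sub_self _
            rw [this, zero_mul]
    calc ∑ i, π i * w i = ∑ i, (π i * (if i = j then (1:ℝ) else 0) - π i * (L * X) i j) := by
          refine Finset.sum_congr rfl fun i _ => ?_
          simp only [hwdef, hPdef, Matrix.sub_apply, Matrix.one_apply]
          ring
      _ = (∑ i, π i * (if i = j then (1:ℝ) else 0)) - ∑ i, π i * (L * X) i j := by
          rw [Finset.sum_sub_distrib]
      _ = π j := by rw [hLXsum]; simp [mul_ite]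
  intro i
  have hwconst : ∀ i', w i' = w i := fun i' => hconst i' i
  have : ∑ i', π i' * w i' = w i := by
    calc ∑ i', π i' * w i' = ∑ i', π i' * w i := by
          refine Finset.sum_congr rfl fun i' _ => by rw [hwconst i']
      _ = (∑ i', π i') * w i := by rw [Finset.sum_mul]
      _ = w i := by rw [hπ1, one_mul]
  have hwi : w i = π j := by rw [← this, hPval]
  calc (if i = j then (1:ℝ) else 0) - ((1 - T) * X) i j
      = P i j := by simp [hPdef, Matrix.sub_apply, Matrix.one_apply, hLdef]
    _ = π j := hwi

/-- The candidate vector satisfies the mean-first-passage linear system. -/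
lemma candidate_system {T X : Matrix (Fin n) (Fin n) ℝ} {π : Fin n → ℝ}
    (hT : IsStochastic T) (j : Fin n) (hπj : π j ≠ 0)
    (key : ∀ i, (if i = j then (1:ℝ) else 0) - ((1 - T) * X) i j = π j) :
    ∀ i, (X j j - X i j + (if i = j then (1:ℝ) else 0)) / π j
      = 1 + ∑ l ∈ Finset.univ.erase j, T i l *
          ((X j j - X l j + (if l = j then (1:ℝ) else 0)) / π j) := by
  intro i
  set c : Fin n → ℝ := fun l => (X j j - X l j + (if l = j then (1:ℝ) else 0)) / π j with hc
  have hrow := hT.2 i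
  have hkey := key i
  have hmul : ((1 - T) * X) i j = X i j - ∑ l, T i l * X l j := by
    rw [Matrix.mul_apply]
    calc ∑ m, (1 - T) i m * X m j
        = ∑ m, ((if i = m then (1:ℝ) else 0) * X m j - T i m * X m j) := by
          refine Finset.sum_congr rfl fun m _ => ?_
          simp only [Matrix.sub_apply, Matrix.one_apply]; ring
      _ = (∑ m, (if i = m then (1:ℝ) else 0) * X m j) - ∑ m, T i m * X m j := by
          rw [Finset.sum_sub_distrib]
      _ = X i j - ∑ m, T i m * X m j := by simp [ite_mul]
  have herase : ∑ l ∈ Finset.univ.erase j, T i l * c l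
      = (∑ l, T i l * c l) - T i j * c j := by
    rw [← Finset.sum_erase_add Finset.univ _ (Finset.mem_univ j)]
    ring
  have hsum : ∑ l, T i l * c l
      = (X j j - (∑ l, T i l * X l j) + T i j) / π j := by
    rw [hc]
    simp only [← mul_div_assoc]
    rw [← Finset.sum_div]
    congr 1
    calc ∑ l, T i l * (X j j - X l j + if l = j then (1:ℝ) else 0)
        = ∑ l, (T i l * X j j - T i l * X l j + T i l * (if l = j then (1:ℝ) else 0)) := by
          refine Finset.sum_congr rfl fun l _ => by ring
      _ = (∑ l, T i l * X j j) - (∑ l, T i l * X l j) + ∑ l, T i l * (if l = j then (1:ℝ) else 0) := by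
          rw [Finset.sum_add_distrib, Finset.sum_sub_distrib]
      _ = X j j - (∑ l, T i l * X l j) + T i j := by
          rw [← Finset.sum_mul, hrow, one_mul]
          simp [mul_ite]
  have hcj : c j = 1 / π j := by simp [hc]
  rw [herase, hsum, hcj]
  have hkey' : (if i = j then (1:ℝ) else 0) - (X i j - ∑ l, T i l * X l j) = π j := by
    rw [← hmul]; exact hkey
  field_simp
  nlinarith [hkey']

lemma pathProb_cons (T : Matrix (Fin n) (Fin n) ℝ) (k : ℕ) (a : Fin n)
    (q : Fin (k + 1) → Fin n) :
    pathProb T (k + 1) (Fin.cons a q) = T a (q 0) * pathProb T k q := by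
  unfold pathProb
  rw [Fin.prod_univ_succ]
  congr 1

lemma fp_succ (T : Matrix (Fin n) (Fin n) ℝ) (i j : Fin n) (k : ℕ) :
    firstPassageProb T i j (k + 1)
      = (if k = 0 then T i j else 0)
        + ∑ l ∈ Finset.univ.erase j, T i l * firstPassageProb T l j k := by
  -- notation for the two conditions on the tail path
  set C' : (Fin (k+1) → Fin n) → Prop :=
    fun q => ∀ s : Fin (k+1), s ≠ Fin.last k → q s ≠ j with hC'
  set C'' : (Fin (k+1) → Fin n) → Prop :=
    fun q => ∀ s : Fin (k+1), s ≠ 0 → s ≠ Fin.last k → q s ≠ j with hC''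
  -- Step A: reindex over (head, tail)
  have stepA : firstPassageProb T i j (k + 1)
      = ∑ a : Fin n, ∑ q : Fin (k+1) → Fin n,
          if (a = i ∧ q (Fin.last k) = j ∧ C' q)
            then T a (q 0) * pathProb T k q else 0 := by
    unfold firstPassageProb
    rw [← (Fin.consEquiv (fun _ : Fin (k+2) => Fin n)).sum_comp]
    rw [Fintype.sum_prod_type]
    refine Finset.sum_congr rfl fun a _ => Finset.sum_congr rfl fun q _ => ?_
    have he : (Fin.consEquiv (fun _ : Fin (k+2) => Fin n)) (a, q) = Fin.cons a q := rfl
    rw [he]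
    have hcond : ((Fin.cons a q : Fin (k+2) → Fin n) 0 = i ∧
          (Fin.cons a q : Fin (k+2) → Fin n) (Fin.last (k+1)) = j ∧
          (∀ t : Fin (k+2), t ≠ 0 → t ≠ Fin.last (k+1) →
            (Fin.cons a q : Fin (k+2) → Fin n) t ≠ j))
        ↔ (a = i ∧ q (Fin.last k) = j ∧ C' q) := by
      constructor
      · rintro ⟨h1, h2, h3⟩
        refine ⟨by rwa [Fin.cons_zero] at h1, ?_, ?_⟩
        · rw [← Fin.succ_last, Fin.cons_succ] at h2; exact h2
        · intro s hs
          have := h3 s.succ (Fin.succ_ne_zero s)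
            (by rw [← Fin.succ_last]; exact fun hh => hs (Fin.succ_injective _ hh))
          rwa [Fin.cons_succ] at this
      · rintro ⟨h1, h2, h3⟩
        refine ⟨by rwa [Fin.cons_zero], ?_, ?_⟩
        · rw [← Fin.succ_last, Fin.cons_succ]; exact h2
        · intro t ht0 htl
          obtain ⟨s, rfl⟩ := Fin.eq_succ_of_ne_zero ht0
          rw [Fin.cons_succ]
          refine h3 s fun hs => ?_
          rw [hs, Fin.succ_last] at htl
          exact htl rfl
    rw [if_congr hcond rfl rfl, pathProb_cons]
  -- Step B: collapse the head sum
  have stepB : firstPassageProb T i j (k + 1)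
      = ∑ q : Fin (k+1) → Fin n,
          if (q (Fin.last k) = j ∧ C' q)
            then T i (q 0) * pathProb T k q else 0 := by
    rw [stepA, Finset.sum_comm]
    refine Finset.sum_congr rfl fun q _ => ?_
    simp only [ite_and]
    rw [Finset.sum_ite_eq' Finset.univ i
      (fun a => if q (Fin.last k) = j then (if C' q then T a (q 0) * pathProb T k q else 0) else 0)]
    simp
  -- Step C: fiber over the starting point of the tail
  have stepC : firstPassageProb T i j (k + 1)
      = ∑ l : Fin n, ∑ q : Fin (k+1) → Fin n,
          if (q 0 = l ∧ q (Fin.last k) = j ∧ C' q)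
            then T i (q 0) * pathProb T k q else 0 := by
    rw [stepB, Finset.sum_comm]
    refine Finset.sum_congr rfl fun q _ => ?_
    by_cases h : (q (Fin.last k) = j ∧ C' q)
    · rw [if_pos h]
      rw [Finset.sum_eq_single (q 0)]
      · rw [if_pos ⟨rfl, h⟩]
      · intro l _ hl
        rw [if_neg]
        rintro ⟨h0, -⟩
        exact hl h0.symm
      · intro habs; exact absurd (Finset.mem_univ (q 0)) habs
    · rw [if_neg h]
      refine (Finset.sum_eq_zero fun l _ => ?_).symm
      rw [if_neg]
      rintro ⟨-, h2⟩
      exact h h2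
  rw [stepC]
  -- Step D: split off the `l = j` term
  rw [← Finset.add_sum_erase Finset.univ _ (Finset.mem_univ j)]
  congr 1
  -- D1 : the `l = j` term
  · rcases Nat.eq_zero_or_pos k with hk | hk
    · subst hk
      rw [if_pos rfl]
      have huniq : ∀ q : Fin 1 → Fin n,
          (q 0 = j ∧ q (Fin.last 0) = j ∧ C' q) ↔ q 0 = j := by
        intro q
        constructor
        · rintro ⟨h1, -, -⟩; exact h1
        · intro h1
          refine ⟨h1, h1, fun s hs => absurd (Fin.eq_zero s) hs⟩
      calc ∑ q : Fin 1 → Fin n,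
            (if (q 0 = j ∧ q (Fin.last 0) = j ∧ C' q)
              then T i (q 0) * pathProb T 0 q else 0)
          = ∑ q : Fin 1 → Fin n, (if q 0 = j then T i j else 0) := by
            refine Finset.sum_congr rfl fun q _ => ?_
            rw [if_congr (huniq q) rfl rfl]
            by_cases h : q 0 = j
            · rw [if_pos h, if_pos h, h]
              simp [pathProb]
            · rw [if_neg h, if_neg h]
        _ = T i j := by
            rw [← (Equiv.funUnique (Fin 1) (Fin n)).symm.sum_comp]
            simp
    · rw [if_neg (Nat.pos_iff_ne_zero.mp hk)]
      refine Finset.sum_eq_zero fun q _ => ?_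
      rw [if_neg]
      rintro ⟨h0, -, h3⟩
      have hlast : (0 : Fin (k+1)) ≠ Fin.last k := by
        intro hh
        have := congrArg Fin.val hh
        simp [Fin.last] at this
        omega
      exact h3 0 hlast h0
  -- D2 : the `l ≠ j` terms
  · refine Finset.sum_congr rfl fun l hl => ?_
    have hlj : l ≠ j := Finset.ne_of_mem_erase hl
    unfold firstPassageProb
    rw [Finset.mul_sum]
    refine Finset.sum_congr rfl fun q _ => ?_
    have hiff : (q 0 = l ∧ q (Fin.last k) = j ∧ C' q)
        ↔ (q 0 = l ∧ q (Fin.last k) = j ∧ C'' q) := by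
      constructor
      · rintro ⟨h1, h2, h3⟩
        exact ⟨h1, h2, fun s hs0 hsl => h3 s hsl⟩
      · rintro ⟨h1, h2, h3⟩
        refine ⟨h1, h2, fun s hsl => ?_⟩
        by_cases hs0 : s = 0
        · rw [hs0, h1]; exact hlj
        · exact h3 s hs0 hsl
    rw [if_congr hiff rfl rfl]
    by_cases h : (q 0 = l ∧ q (Fin.last k) = j ∧ C'' q)
    · have hcond : q 0 = l ∧ q (Fin.last k) = j ∧
          ∀ t : Fin (k+1), t ≠ 0 → t ≠ Fin.last k → q t ≠ j := ⟨h.1, h.2.1, h.2.2⟩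
      rw [if_pos h, if_pos hcond, h.1]
    · have hcond : ¬ (q 0 = l ∧ q (Fin.last k) = j ∧
          ∀ t : Fin (k+1), t ≠ 0 → t ≠ Fin.last k → q t ≠ j) :=
        fun hc => h ⟨hc.1, hc.2.1, hc.2.2⟩
      rw [if_neg h, if_neg hcond, mul_zero]

lemma fp_nonneg {T : Matrix (Fin n) (Fin n) ℝ} (hT : IsStochastic T)
    (i j : Fin n) (k : ℕ) : 0 ≤ firstPassageProb T i j k := by
  refine Finset.sum_nonneg fun p _ => ?_
  split
  · exact Finset.prod_nonneg fun t _ => hT.1 _ _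
  · exact le_refl 0

lemma fp_zero (T : Matrix (Fin n) (Fin n) ℝ) (i j : Fin n) :
    firstPassageProb T i j 0 = if i = j then 1 else 0 := by
  unfold firstPassageProb
  rw [← ((Equiv.funUnique (Fin 1) (Fin n)).symm.sum_comp)]
  have hpp : ∀ x : Fin n, pathProb T 0 (fun _ => x) = 1 := by
    intro x; unfold pathProb; simp
  have hval : ∀ x : Fin n,
      ((Equiv.funUnique (Fin 1) (Fin n)).symm x : Fin 1 → Fin n) = fun _ => x := fun x => rfl
  calc ∑ x : Fin n,
        (if ((Equiv.funUnique (Fin 1) (Fin n)).symm x : Fin 1 → Fin n) 0 = i ∧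
            ((Equiv.funUnique (Fin 1) (Fin n)).symm x : Fin 1 → Fin n) (Fin.last 0) = j ∧
            (∀ t : Fin 1, t ≠ 0 → t ≠ Fin.last 0 →
              ((Equiv.funUnique (Fin 1) (Fin n)).symm x : Fin 1 → Fin n) t ≠ j)
          then pathProb T 0 ((Equiv.funUnique (Fin 1) (Fin n)).symm x) else 0)
      = ∑ x : Fin n, (if x = i ∧ x = j then (1:ℝ) else 0) := by
        refine Finset.sum_congr rfl fun x _ => ?_
        rw [hval x]
        by_cases h : x = i ∧ x = j
        · rw [if_pos ⟨h.1, h.2, fun t ht0 _ => absurd (Fin.eq_zero t) ht0⟩, if_pos h, hpp]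
        · rw [if_neg (fun hc => h ⟨hc.1, hc.2.1⟩), if_neg h]
    _ = if i = j then 1 else 0 := by
        by_cases h : i = j
        · subst h
          simp
        · rw [if_neg h]
          refine Finset.sum_eq_zero fun x _ => ?_
          rw [if_neg]
          rintro ⟨rfl, h2⟩
          exact h h2

lemma fp_eq_avoid_sub {T : Matrix (Fin n) (Fin n) ℝ} (hT : IsStochastic T)
    (j : Fin n) (k : ℕ) (i : Fin n) :
    firstPassageProb T i j (k + 1) = avoid T j k i - avoid T j (k + 1) i := by
  induction k generalizing i with
  | zero =>
    rw [fp_succ, if_pos rfl, avoid_zero, avoid_succ]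
    have h1 : ∑ l ∈ Finset.univ.erase j, T i l * firstPassageProb T l j 0 = 0 := by
      refine Finset.sum_eq_zero fun l hl => ?_
      rw [fp_zero, if_neg (Finset.ne_of_mem_erase hl), mul_zero]
    have h2 : ∑ l ∈ Finset.univ.erase j, T i l * avoid T j 0 l
        = ∑ l ∈ Finset.univ.erase j, T i l := by
      refine Finset.sum_congr rfl fun l _ => by rw [avoid_zero, mul_one]
    have h3 : T i j + ∑ l ∈ Finset.univ.erase j, T i l = 1 := by
      rw [add_comm, Finset.sum_erase_add Finset.univ _ (Finset.mem_univ j)]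
      exact hT.2 i
    rw [h1, h2]
    linarith
  | succ k ih =>
    rw [fp_succ, if_neg (Nat.succ_ne_zero k), zero_add,
      avoid_succ (k := k + 1), avoid_succ (k := k)]
    rw [← Finset.sum_sub_distrib]
    refine Finset.sum_congr rfl fun l _ => ?_
    rw [ih l]
    ring

lemma fp_partial_sum {T : Matrix (Fin n) (Fin n) ℝ} (hT : IsStochastic T)
    (i j : Fin n) (K : ℕ) :
    ∑ k ∈ Finset.range (K + 1), (k : ℝ) * firstPassageProb T i j k
      = (∑ k ∈ Finset.range K, avoid T j k i) - K * avoid T j K i := by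
  induction K with
  | zero => simp
  | succ K ih =>
    rw [Finset.sum_range_succ, ih, fp_eq_avoid_sub hT, Finset.sum_range_succ]
    push_cast
    ring

lemma mfpt_eq_tsum_avoid {T : Matrix (Fin n) (Fin n) ℝ} (hT : IsStochastic T)
    {j : Fin n} {C ρ : ℝ} (hρ0 : 0 < ρ) (hρ1 : ρ < 1) (hC : 0 ≤ C)
    (hbd : ∀ k i, avoid T j k i ≤ C * ρ ^ k) (i : Fin n) :
    mfpt T i j = ∑' k, avoid T j k i := by
  have hsumA : Summable (fun k => avoid T j k i) := by
    refine Summable.of_nonneg_of_le (fun k => avoid_nonneg hT k i) (fun k => hbd k i) ?_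
    exact (summable_geometric_of_lt_one hρ0.le hρ1).mul_left C
  have htsumA_nonneg : ∀ K : ℕ, (0:ℝ) ≤ (K:ℝ) * avoid T j K i :=
    fun K => mul_nonneg (Nat.cast_nonneg K) (avoid_nonneg hT K i)
  have hpartial_le : ∀ K, ∑ k ∈ Finset.range K, (k : ℝ) * firstPassageProb T i j k
      ≤ ∑' k, avoid T j k i := by
    intro K
    have h1 : ∑ k ∈ Finset.range K, (k : ℝ) * firstPassageProb T i j k
        ≤ ∑ k ∈ Finset.range (K + 1), (k : ℝ) * firstPassageProb T i j k := by
      refine Finset.sum_le_sum_of_subset_of_nonneg (Finset.range_subset_range.2 (Nat.le_succ K)) ?_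
      intro k _ _
      exact mul_nonneg (Nat.cast_nonneg k) (fp_nonneg hT i j k)
    rw [fp_partial_sum hT i j K] at h1
    have h2 : ∑ k ∈ Finset.range K, avoid T j k i ≤ ∑' k, avoid T j k i :=
      Summable.sum_le_tsum _ (fun k _ => avoid_nonneg hT k i) hsumA
    have h3 := htsumA_nonneg K
    linarith
  have hsumF : Summable (fun k : ℕ => (k : ℝ) * firstPassageProb T i j k) :=
    summable_of_sum_range_le
      (fun (k : ℕ) => mul_nonneg (Nat.cast_nonneg k) (fp_nonneg hT i j k)) hpartial_le
  have hKA : Filter.Tendsto (fun K : ℕ => (K:ℝ) * avoid T j K i) Filter.atTop (nhds 0) := by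
    have hsg : Summable (fun k : ℕ => (k:ℝ) ^ 1 * ρ ^ k) :=
      summable_pow_mul_geometric_of_norm_lt_one 1 (by rwa [Real.norm_eq_abs, abs_of_pos hρ0])
    have hlim : Filter.Tendsto (fun k : ℕ => C * ((k:ℝ) ^ 1 * ρ ^ k)) Filter.atTop (nhds 0) := by
      have := hsg.tendsto_atTop_zero
      simpa using this.const_mul C
    refine squeeze_zero htsumA_nonneg (fun K => ?_) hlim
    have hK0 : (0:ℝ) ≤ (K:ℝ) := Nat.cast_nonneg K
    calc (K:ℝ) * avoid T j K i ≤ (K:ℝ) * (C * ρ ^ K) :=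
          mul_le_mul_of_nonneg_left (hbd K i) hK0
      _ = C * ((K:ℝ) ^ 1 * ρ ^ K) := by ring
  have hA : Filter.Tendsto (fun K => ∑ k ∈ Finset.range K, avoid T j k i)
      Filter.atTop (nhds (∑' k, avoid T j k i)) := hsumA.hasSum.tendsto_sum_nat
  have hmain : Filter.Tendsto
      (fun K => ∑ k ∈ Finset.range K, (k : ℝ) * firstPassageProb T i j k)
      Filter.atTop (nhds (∑' k, avoid T j k i)) := by
    rw [← Filter.tendsto_add_atTop_iff_nat 1]
    have heq : (fun K => ∑ k ∈ Finset.range (K + 1), (k : ℝ) * firstPassageProb T i j k)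
        = fun K : ℕ => (∑ k ∈ Finset.range K, avoid T j k i) - K * avoid T j K i := by
      funext K; exact fp_partial_sum hT i j K
    rw [heq]
    have := hA.sub hKA
    simpa using this
  exact ((hsumF.hasSum_iff_tendsto_nat).2 hmain).tsum_eq

lemma mfpt_system {T : Matrix (Fin n) (Fin n) ℝ} (hT : IsStochastic T)
    {j : Fin n} {C ρ : ℝ} (hρ0 : 0 < ρ) (hρ1 : ρ < 1) (hC : 0 ≤ C)
    (hbd : ∀ k i, avoid T j k i ≤ C * ρ ^ k) (i : Fin n) :
    mfpt T i j = 1 + ∑ l ∈ Finset.univ.erase j, T i l * mfpt T l j := by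
  have hsumA : ∀ i', Summable (fun k => avoid T j k i') := by
    intro i'
    refine Summable.of_nonneg_of_le (fun k => avoid_nonneg hT k i') (fun k => hbd k i') ?_
    exact (summable_geometric_of_lt_one hρ0.le hρ1).mul_left C
  rw [mfpt_eq_tsum_avoid hT hρ0 hρ1 hC hbd i]
  rw [Summable.tsum_eq_zero_add (hsumA i)]
  rw [avoid_zero]
  congr 1
  calc ∑' k, avoid T j (k + 1) i
      = ∑' k, ∑ l ∈ Finset.univ.erase j, T i l * avoid T j k l :=
        tsum_congr fun k => avoid_succ k i
    _ = ∑ l ∈ Finset.univ.erase j, ∑' k, T i l * avoid T j k l :=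
        Summable.tsum_finsetSum fun l _ => (hsumA l).mul_left (T i l)
    _ = ∑ l ∈ Finset.univ.erase j, T i l * mfpt T l j := by
        refine Finset.sum_congr rfl fun l _ => ?_
        rw [tsum_mul_left, mfpt_eq_tsum_avoid hT hρ0 hρ1 hC hbd l]

lemma system_unique {T : Matrix (Fin n) (Fin n) ℝ} (hT : IsStochastic T)
    {j : Fin n} {C ρ : ℝ} (hρ0 : 0 < ρ) (hρ1 : ρ < 1)
    (hbd : ∀ k i, avoid T j k i ≤ C * ρ ^ k) {v : Fin n → ℝ}
    (hv : ∀ i, v i = ∑ l ∈ Finset.univ.erase j, T i l * v l) :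
    ∀ i, v i = 0 := by
  set M : ℝ := ∑ l, |v l| with hM
  have hM0 : 0 ≤ M := Finset.sum_nonneg fun l _ => abs_nonneg (v l)
  have hbound : ∀ K i, |v i| ≤ avoid T j K i * M := by
    intro K
    induction K with
    | zero =>
      intro i
      rw [avoid_zero, one_mul]
      exact Finset.single_le_sum (fun l (_ : l ∈ Finset.univ) => abs_nonneg (v l))
        (Finset.mem_univ i)
    | succ K ih =>
      intro i
      rw [hv i, avoid_succ]
      calc |∑ l ∈ Finset.univ.erase j, T i l * v l|
          ≤ ∑ l ∈ Finset.univ.erase j, |T i l * v l| := Finset.abs_sum_le_sum_abs _ _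
        _ = ∑ l ∈ Finset.univ.erase j, T i l * |v l| := by
            refine Finset.sum_congr rfl fun l _ => ?_
            rw [abs_mul, abs_of_nonneg (hT.1 i l)]
        _ ≤ ∑ l ∈ Finset.univ.erase j, T i l * (avoid T j K l * M) := by
            refine Finset.sum_le_sum fun l _ => ?_
            exact mul_le_mul_of_nonneg_left (ih l) (hT.1 i l)
        _ = (∑ l ∈ Finset.univ.erase j, T i l * avoid T j K l) * M := by
            rw [Finset.sum_mul]
            exact Finset.sum_congr rfl fun l _ => by ring
  intro i
  have hlim : Filter.Tendsto (fun K => avoid T j K i * M) Filter.atTop (nhds 0) := by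
    have h1 : Filter.Tendsto (fun K : ℕ => C * ρ ^ K * M) Filter.atTop (nhds 0) := by
      have h0 := tendsto_pow_atTop_nhds_zero_of_lt_one hρ0.le hρ1
      have h2 := (h0.const_mul C).mul_const M
      simpa using h2
    refine squeeze_zero (fun K => mul_nonneg (avoid_nonneg hT K i) hM0) (fun K => ?_) h1
    exact mul_le_mul_of_nonneg_right (hbd K i) hM0
  have habs : |v i| ≤ 0 :=
    le_of_tendsto_of_tendsto' tendsto_const_nhds hlim (fun K => hbound K i)
  exact abs_eq_zero.mp (le_antisymm habs (abs_nonneg (v i)))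


/-- Entrywise form: `m_{jj} = 1/π_j` and, for `i ≠ j`,
`m_{ij} = (L^#_{jj} - L^#_{ij})/π_j`. -/
theorem mfpt_entrywise {n : ℕ} (T : Matrix (Fin n) (Fin n) ℝ)
    (hS : IsStochastic T) (hIrr : IsIrreducible T) (hErg : IsErgodic T)
    (π : Fin n → ℝ) (hπ : IsStationary T π)
    (Lsharp : Matrix (Fin n) (Fin n) ℝ) (hL : IsGroupInverse (1 - T) Lsharp) :
    (∀ j, mfpt T j j = 1 / π j) ∧
      ∀ i j, i ≠ j → mfpt T i j = (Lsharp j j - Lsharp i j) / π j := by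
  have main : ∀ j i : Fin n, mfpt T i j
      = (Lsharp j j - Lsharp i j + (if i = j then (1:ℝ) else 0)) / π j := by
    intro j i
    obtain ⟨N, hN1, hN⟩ := exists_pos_pow hS hErg
    have hπj : 0 < π j := pi_pos hS hErg hπ j
    obtain ⟨C, ρ, hρ0, hρ1, hC, hbd⟩ := avoid_geom_bound (j := j) hS hN1 hN
    have key := proj_col hS hN hπ.2.1 hπ.2.2 hL j
    have hcand := candidate_system hS j hπj.ne' key
    have hsys := fun i' => mfpt_system hS hρ0 hρ1 hC hbd i'
    have hv : ∀ i', mfpt T i' j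
          - (Lsharp j j - Lsharp i' j + (if i' = j then (1:ℝ) else 0)) / π j
        = ∑ l ∈ Finset.univ.erase j, T i' l * (mfpt T l j
          - (Lsharp j j - Lsharp l j + (if l = j then (1:ℝ) else 0)) / π j) := by
      intro i'
      rw [hsys i']
      conv_lhs => rw [hcand i']
      have hsplit : ∑ l ∈ Finset.univ.erase j, T i' l *
            (mfpt T l j - (Lsharp j j - Lsharp l j + (if l = j then (1:ℝ) else 0)) / π j)
          = (∑ l ∈ Finset.univ.erase j, T i' l * mfpt T l j)
            - ∑ l ∈ Finset.univ.erase j, T i' l *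
                ((Lsharp j j - Lsharp l j + (if l = j then (1:ℝ) else 0)) / π j) := by
        rw [← Finset.sum_sub_distrib]
        exact Finset.sum_congr rfl fun l _ => by ring
      rw [hsplit]
      ring
    have hz := system_unique hS hρ0 hρ1 hbd
      (v := fun l => mfpt T l j
        - (Lsharp j j - Lsharp l j + (if l = j then (1:ℝ) else 0)) / π j) hv i
    linarith [hz]
  constructor
  · intro j
    have hmj := main j j
    rw [if_pos rfl] at hmj
    rw [hmj]
    norm_num
  · intro i j hij
    have hmj := main j i
    rw [if_neg hij, add_zero] at hmj
    exact hmj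


end MFPT
end

section
/- Let G be a weighted digraph with Laplacian L. Define Q_0 = I and recursively σ_{k+1} = tr(L Q_k)/(k+1), Q_{k+1} = -L Q_k + σ_{k+1} I. Then for every k, σ_k equals the total weight of spanning in-forests of G with k arcs, and the (i,j) entry of Q_k equals the total weight of in-forests with k arcs in which i lies in the tree converging to j. -/
open scoped Classical
open Finset Matrix

/-!
Expanding `L Q_k` entrywise (`L` has zero row sums), the recursion amounts to the identity
`∑ₘ w i m * (Q_k i j - Q_k m j) = [i = j] σ_{k+1} - Q_{k+1} i j`, together with
`∑ᵢ Q_c i i = (n - c) σ_c` (a forest with `c` arcs has `n - c` roots), which turns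
`tr (L Q_k)` into `(k + 1) σ_{k+1}`.

For the identity, write every functional subgraph as `F` with `F i = none`, possibly with one
arc `i → u` added; the result is an in-forest iff `F` is one and `u` does not reach `i` in `F`,
and then its weight is `w i u` times that of `F`. The terms of the left-hand side in which `i`
is a root of the forest match the forests with `k + 1` arcs that use an arc `i → m`, i.e. the
right-hand side. The terms in which the forest already has an arc `i → u` cancel: after removing
that arc they become antisymmetric under exchanging `m` and `u`.
-/

namespace MFPT

local notation:50 a:51 " ⇝[" F "] " b:51 => Relation.ReflTransGen (Step F) a b

lemma sum_sum_eq_zero_of_antisymm {ι M : Type*} [Fintype ι] [AddCommGroup M] [IsAddTorsionFree M]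
    (f : ι → ι → M) (h : ∀ a b, f a b = -f b a) : ∑ a, ∑ b, f a b = 0 :=
  self_eq_neg.mp <| calc
    ∑ a, ∑ b, f a b = ∑ b, ∑ a, f a b := Finset.sum_comm
    _ = ∑ b, ∑ a, -f b a := Finset.sum_congr rfl fun b _ => Finset.sum_congr rfl fun a _ => h a b
    _ = -∑ b, ∑ a, f b a := by simp only [Finset.sum_neg_distrib]

lemma sum_eq_sum_eq_none_add_sum_update {α β M : Type*} [Fintype α] [DecidableEq α] [Fintype β]
    [DecidableEq β] [AddCommMonoid M] (i : α) (g : (α → Option β) → M) :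
    ∑ G, g G = ∑ F with F i = none, (g F + ∑ u, g (Function.update F i (some u))) := by
  have fiber (x : Option β) :
      ∑ G with G i = x, g G = ∑ F with F i = none, g (Function.update F i x) := by
    refine Finset.sum_nbij' (fun G => Function.update G i none) (fun F => Function.update F i x)
      ?_ ?_ ?_ ?_ ?_ <;> intro G hG <;> simp only [Finset.mem_filter] at hG
    · simp
    · simp
    · simp [← hG.2]
    · simp [← hG.2]
    · simp [← hG.2]
  calc ∑ G, g G = ∑ x, ∑ G with G i = x, g G := (Finset.sum_fiberwise _ _ _).symm
    _ = ∑ x, ∑ F with F i = none, g (Function.update F i x) :=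
      Finset.sum_congr rfl fun x _ => fiber x
    _ = ∑ F with F i = none, ∑ x, g (Function.update F i x) := Finset.sum_comm
    _ = _ := Finset.sum_congr rfl fun F hF => by
      rw [Fintype.sum_option, ← (Finset.mem_filter.mp hF).2, Function.update_eq_self]

-- An indicator without a `Decidable` argument, so that `rw` can rewrite the proposition inside.
noncomputable def ofProp (p : Prop) : ℝ := if p then 1 else 0

noncomputable def inForestWeight {n : ℕ} (w : Matrix (Fin n) (Fin n) ℝ)
    (F : Fin n → Option (Fin n)) : ℝ :=
  if IsInForest w F then forestWeight w F else 0

section Reachability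

variable {n : ℕ} {F : Fin n → Option (Fin n)} {a b r j : Fin n}

lemma step_rightUnique (F : Fin n → Option (Fin n)) : Relator.RightUnique (Step F) :=
  fun _ _ _ hb hc => Option.some_injective _ (hb.symm.trans hc)

lemma eq_of_reach_of_root (h : a ⇝[F] b) (ha : F a = none) : a = b := by
  rcases h.cases_head with rfl | ⟨c, hc, -⟩
  · rfl
  · simp [Step, ha] at hc

lemma inTreeOf_self_iff (hr : F r = none) : InTreeOf F r j ↔ r = j :=
  ⟨fun h => eq_of_reach_of_root h.1 hr, fun h => h ▸ ⟨.refl, hr⟩⟩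

lemma inTreeOf_iff_of_reach (h : a ⇝[F] b) : InTreeOf F a j ↔ InTreeOf F b j := by
  refine ⟨fun ⟨haj, hj⟩ => ⟨?_, hj⟩, fun ⟨hbj, hj⟩ => ⟨h.trans hbj, hj⟩⟩
  rcases Relation.ReflTransGen.total_of_right_unique (step_rightUnique F) h haj with hbj | hjb
  · exact hbj
  · exact eq_of_reach_of_root hjb hj ▸ .refl

lemma inTreeOf_iff_of_reach_root (hr : F r = none) (h : a ⇝[F] r) :
    InTreeOf F a j ↔ r = j :=
  (inTreeOf_iff_of_reach h).trans (inTreeOf_self_iff hr)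

lemma transGen_self_of_reach (ha : Relation.TransGen (Step F) a a) (h : a ⇝[F] b) :
    Relation.TransGen (Step F) b b := by
  induction h using Relation.ReflTransGen.head_induction_on with
  | refl => exact ha
  | head hac _ ih =>
    obtain ⟨c', hac', hc'a⟩ := Relation.TransGen.head'_iff.mp ha
    cases step_rightUnique F hac hac'
    exact ih (.tail' hc'a hac)

end Reachability

section AddArcAtRoot

open Function

variable {n : ℕ} {w : Matrix (Fin n) (Fin n) ℝ} {F : Fin n → Option (Fin n)} {a b i j u : Fin n}

lemma step_update_self : Step (update F i (some u)) i u := by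
  simp [Step]

lemma step_update_iff_of_ne (hai : a ≠ i) (x : Option (Fin n)) :
    Step (update F i x) a b ↔ Step F a b := by
  simp only [Step, update_of_ne hai]

lemma step_update_of_root (hFi : F i = none) (x : Option (Fin n)) (h : Step F a b) :
    Step (update F i x) a b := by
  have hai : a ≠ i := by rintro rfl; simp [Step, hFi] at h
  exact (step_update_iff_of_ne hai x).mpr h

lemma reach_update_of_root (hFi : F i = none) (x : Option (Fin n)) (h : a ⇝[F] b) :
    a ⇝[update F i x] b :=
  Relation.ReflTransGen.mono (fun _ _ => step_update_of_root hFi x) _ _ h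

lemma ne_of_not_reach (ha : ¬ a ⇝[F] i) : a ≠ i := by
  rintro rfl; exact ha .refl

lemma reach_update_iff (ha : ¬ a ⇝[F] i) (x : Option (Fin n)) :
    (a ⇝[update F i x] b) ↔ a ⇝[F] b := by
  constructor
  · intro h
    induction h using Relation.ReflTransGen.head_induction_on with
    | refl => exact .refl
    | head hac _ ih =>
      have hac := (step_update_iff_of_ne (ne_of_not_reach ha) x).mp hac
      exact .head hac (ih fun hci => ha (.head hac hci))
  · intro h
    induction h using Relation.ReflTransGen.head_induction_on with
    | refl => exact .refl
    | head hac _ ih =>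
      exact .head ((step_update_iff_of_ne (ne_of_not_reach ha) x).mpr hac)
        (ih fun hci => ha (.head hac hci))

lemma inTreeOf_update_iff_of_not_reach (ha : ¬ a ⇝[F] i) :
    InTreeOf (update F i (some u)) a j ↔ InTreeOf F a j := by
  unfold InTreeOf
  rw [reach_update_iff ha]
  refine and_congr_right fun haj => ?_
  have hji : j ≠ i := by rintro rfl; exact ha haj
  rw [update_of_ne hji]

lemma inTreeOf_update_iff_of_reach (hFi : F i = none) (hu : ¬ u ⇝[F] i) (ha : a ⇝[F] i) :
    InTreeOf (update F i (some u)) a j ↔ InTreeOf F u j := by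
  have hau : a ⇝[update F i (some u)] u :=
    (reach_update_of_root hFi _ ha).tail step_update_self
  exact (inTreeOf_iff_of_reach hau).trans (inTreeOf_update_iff_of_not_reach hu)

lemma isInForest_update_iff (hFi : F i = none) :
    IsInForest w (update F i (some u)) ↔
      IsInForest w F ∧ (i ≠ u ∧ 0 < w i u) ∧ ¬ u ⇝[F] i := by
  have hstep : Step (update F i (some u)) i u := step_update_self
  constructor
  · rintro ⟨harcs, hacyclic⟩
    refine ⟨⟨fun v x hvx => harcs v x (step_update_of_root hFi _ hvx), fun v hv =>
      hacyclic v (Relation.TransGen.mono (fun _ _ => step_update_of_root hFi _) _ _ hv)⟩,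
      harcs i u hstep, fun hui => hacyclic i (.head' hstep (reach_update_of_root hFi _ hui))⟩
  · rintro ⟨⟨harcs, hacyclic⟩, hiu, hu⟩
    refine ⟨fun v x hvx => ?_, fun v hv => ?_⟩
    · by_cases hvi : v = i
      · subst hvi
        cases step_rightUnique _ hvx hstep
        exact hiu
      · exact harcs v x ((step_update_iff_of_ne hvi _).mp hvx)
    have no_cycle_at_i : ¬ Relation.TransGen (Step (update F i (some u))) i i := by
      intro hi
      obtain ⟨c, hic, hci⟩ := Relation.TransGen.head'_iff.mp hi
      cases step_rightUnique _ hic hstep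
      exact hu ((reach_update_iff hu _).mp hci)
    by_cases hvi : v ⇝[update F i (some u)] i
    · exact no_cycle_at_i (transGen_self_of_reach hv hvi)
    · have hvi : ¬ v ⇝[F] i := fun h => hvi (reach_update_of_root hFi _ h)
      obtain ⟨c, hvc, hcv⟩ := Relation.TransGen.head'_iff.mp hv
      have hvc := (step_update_iff_of_ne (ne_of_not_reach hvi) _).mp hvc
      have hci : ¬ c ⇝[F] i := fun h => hvi (.head hvc h)
      exact hacyclic v (.head' hvc ((reach_update_iff hci _).mp hcv))

lemma forestWeight_update (hFi : F i = none) :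
    forestWeight w (update F i (some u)) = w i u * forestWeight w F := by
  unfold forestWeight
  rw [← Finset.mul_prod_erase _ _ (Finset.mem_univ i),
    ← Finset.mul_prod_erase _ (fun v => (F v).elim 1 (w v)) (Finset.mem_univ i)]
  simp only [update_self, Option.elim_some, hFi, Option.elim_none, one_mul]
  congr 1
  exact Finset.prod_congr rfl fun v hv => by rw [update_of_ne (Finset.ne_of_mem_erase hv)]

lemma arcCount_update (hFi : F i = none) :
    arcCount (update F i (some u)) = arcCount F + 1 := by
  unfold arcCount
  have hinsert : (Finset.univ.filter fun v => (update F i (some u) v).isSome)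
      = insert i (Finset.univ.filter fun v => (F v).isSome) := by
    ext v
    by_cases hvi : v = i <;> simp [hvi]
  rw [hinsert, Finset.card_insert_of_notMem (by simp [hFi])]

lemma inForestWeight_update (hwu : 0 ≤ w i u) (hii : w i i = 0) (hFi : F i = none) :
    inForestWeight w (update F i (some u))
      = w i u * if u ⇝[F] i then 0 else inForestWeight w F := by
  unfold inForestWeight
  rw [isInForest_update_iff hFi, forestWeight_update hFi]
  by_cases hu : u ⇝[F] i
  · simp [hu]
  by_cases hF : IsInForest w F
  · by_cases harc : i ≠ u ∧ 0 < w i u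
    · simp [hu, hF, harc]
    · have hzero : w i u = 0 := by
        by_cases hiu : i = u
        · exact hiu ▸ hii
        · exact le_antisymm (not_lt.mp fun h => harc ⟨hiu, h⟩) hwu
      simp [hzero]
  · simp [hu, hF]

end AddArcAtRoot

section RowIdentity

open Function

variable {n : ℕ} {w : Matrix (Fin n) (Fin n) ℝ} {F : Fin n → Option (Fin n)} {i j m u : Fin n}
  {k : ℕ}

lemma Qmat_apply_eq_sum (k : ℕ) (a j : Fin n) :
    Qmat w k a j = ∑ F, inForestWeight w F * ofProp (arcCount F = k ∧ InTreeOf F a j) := by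
  simp only [Qmat, Matrix.of_apply, inForestWeight, ofProp]
  refine Finset.sum_congr rfl fun F _ => ?_
  split_ifs <;> simp_all

lemma sigmaW_eq_sum (k : ℕ) :
    sigmaW w k = ∑ F, inForestWeight w F * ofProp (arcCount F = k) := by
  simp only [sigmaW, inForestWeight, ofProp]
  refine Finset.sum_congr rfl fun F _ => ?_
  split_ifs <;> simp_all

lemma row_summand_of_root (hwm : 0 ≤ w i m) (hii : w i i = 0) (hFi : F i = none) :
    w i m * (inForestWeight w F *
        (ofProp (arcCount F = k ∧ InTreeOf F i j) - ofProp (arcCount F = k ∧ InTreeOf F m j)))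
      = inForestWeight w (update F i (some m)) *
          (ofProp (arcCount (update F i (some m)) = k + 1 ∧ i = j)
            - ofProp (arcCount (update F i (some m)) = k + 1 ∧
                InTreeOf (update F i (some m)) i j)) := by
  rw [inForestWeight_update hwm hii hFi, arcCount_update hFi, add_left_inj, inTreeOf_self_iff hFi]
  by_cases hm : m ⇝[F] i
  · simp [hm, inTreeOf_iff_of_reach_root hFi hm]
  · rw [if_neg hm, inTreeOf_update_iff_of_reach hFi hm .refl]
    ring

lemma row_summand_update (hwu : 0 ≤ w i u) (hii : w i i = 0) (hFi : F i = none) :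
    w i m * (inForestWeight w (update F i (some u)) *
        (ofProp (arcCount (update F i (some u)) = k ∧ InTreeOf (update F i (some u)) i j)
          - ofProp (arcCount (update F i (some u)) = k ∧ InTreeOf (update F i (some u)) m j)))
      = w i m * w i u * if m ⇝[F] i ∨ u ⇝[F] i then 0 else inForestWeight w F *
          (ofProp (arcCount F + 1 = k ∧ InTreeOf F u j)
            - ofProp (arcCount F + 1 = k ∧ InTreeOf F m j)) := by
  rw [inForestWeight_update hwu hii hFi, arcCount_update hFi]
  by_cases hu : u ⇝[F] i
  · simp [hu]
  rw [if_neg hu, inTreeOf_update_iff_of_reach hFi hu .refl]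
  by_cases hm : m ⇝[F] i
  · simp [hm, inTreeOf_update_iff_of_reach hFi hu hm]
  · rw [inTreeOf_update_iff_of_not_reach hm, if_neg (by tauto)]
    ring

lemma sum_mul_sub_Qmat (hw : ∀ a b, 0 ≤ w a b) (hloop : ∀ a, w a a = 0) (k : ℕ) (i j : Fin n) :
    ∑ m, w i m * (Qmat w k i j - Qmat w k m j)
      = (if i = j then sigmaW w (k + 1) else 0) - Qmat w (k + 1) i j := by
  have lhs : ∑ m, w i m * (Qmat w k i j - Qmat w k m j) = ∑ H, ∑ m, w i m * (inForestWeight w H *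
      (ofProp (arcCount H = k ∧ InTreeOf H i j) - ofProp (arcCount H = k ∧ InTreeOf H m j))) := by
    simp only [Qmat_apply_eq_sum, ← Finset.sum_sub_distrib, ← mul_sub, Finset.mul_sum]
    exact Finset.sum_comm
  have rhs : (if i = j then sigmaW w (k + 1) else 0) - Qmat w (k + 1) i j
      = ∑ G, inForestWeight w G * (ofProp (arcCount G = k + 1 ∧ i = j)
          - ofProp (arcCount G = k + 1 ∧ InTreeOf G i j)) := by
    by_cases hij : i = j
    · simp [hij, sigmaW_eq_sum, Qmat_apply_eq_sum, ← Finset.sum_sub_distrib, mul_sub]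
    · simp [hij, Qmat_apply_eq_sum, ofProp]
  rw [lhs, rhs, sum_eq_sum_eq_none_add_sum_update i, sum_eq_sum_eq_none_add_sum_update i]
  refine Finset.sum_congr rfl fun F hF => ?_
  have hFi : F i = none := (Finset.mem_filter.mp hF).2
  have root_zero : inForestWeight w F * (ofProp (arcCount F = k + 1 ∧ i = j)
      - ofProp (arcCount F = k + 1 ∧ InTreeOf F i j)) = 0 := by
    rw [inTreeOf_self_iff hFi, sub_self, mul_zero]
  have updates_cancel : ∑ u, ∑ m, w i m * w i u *
      (if m ⇝[F] i ∨ u ⇝[F] i then 0 else inForestWeight w F *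
        (ofProp (arcCount F + 1 = k ∧ InTreeOf F u j)
          - ofProp (arcCount F + 1 = k ∧ InTreeOf F m j))) = 0 :=
    sum_sum_eq_zero_of_antisymm _ fun u m => by
      by_cases hm : m ⇝[F] i <;> by_cases hu : u ⇝[F] i <;> simp [hm, hu]
      ring
  simp only [row_summand_update (hw i _) (hloop i) hFi, updates_cancel, root_zero, zero_add,
    add_zero]
  exact Finset.sum_congr rfl fun m _ => row_summand_of_root (hw i m) (hloop i) hFi

lemma lap_mul_apply (hloop : ∀ a, w a a = 0) (M : Matrix (Fin n) (Fin n) ℝ) (i j : Fin n) :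
    (lap w * M) i j = ∑ m, w i m * (M i j - M m j) := by
  have lap_apply (m : Fin n) : lap w i m = (if i = m then ∑ l, w i l else 0) - w i m := by
    by_cases him : i = m
    · subst him
      simp [lap, hloop i]
    · simp [lap, him]
  simp only [Matrix.mul_apply, lap_apply, sub_mul, ite_mul, zero_mul, Finset.sum_sub_distrib,
    Finset.sum_ite_eq, Finset.mem_univ, if_true, mul_sub, Finset.sum_mul]

lemma lap_mul_Qmat (hw : ∀ a b, 0 ≤ w a b) (hloop : ∀ a, w a a = 0) (k : ℕ) :
    lap w * Qmat w k = sigmaW w (k + 1) • 1 - Qmat w (k + 1) := by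
  ext i j
  rw [lap_mul_apply hloop, sum_mul_sub_Qmat hw hloop]
  simp [Matrix.one_apply]

end RowIdentity

section Counting

variable {n : ℕ} {w : Matrix (Fin n) (Fin n) ℝ} {F : Fin n → Option (Fin n)}

lemma card_roots_add_arcCount (F : Fin n → Option (Fin n)) :
    (Finset.univ.filter fun i => F i = none).card + arcCount F = n := by
  have := Finset.card_filter_add_card_filter_not (s := Finset.univ)
    (fun i : Fin n => (F i).isSome)
  simp only [Option.not_isSome_iff_eq_none, Finset.card_univ, Fintype.card_fin] at this
  unfold arcCount
  omega

lemma sum_Qmat_diag_add (c : ℕ) :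
    ∑ i, Qmat w c i i + c * sigmaW w c = n * sigmaW w c := by
  have inTreeOf_self_self (i : Fin n) (F : Fin n → Option (Fin n)) :
      InTreeOf F i i ↔ F i = none := ⟨And.right, fun h => ⟨.refl, h⟩⟩
  simp only [Qmat_apply_eq_sum, sigmaW_eq_sum, inTreeOf_self_self, Finset.mul_sum]
  rw [Finset.sum_comm, ← Finset.sum_add_distrib]
  refine Finset.sum_congr rfl fun F _ => ?_
  by_cases hc : arcCount F = c
  · have hcard : ((Finset.univ.filter fun i => F i = none).card : ℝ) + c = n := by
      exact_mod_cast hc ▸ card_roots_add_arcCount F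
    simp only [ofProp, hc, true_and, mul_ite, mul_one, mul_zero, if_true, Finset.sum_ite,
      Finset.sum_const, add_zero, nsmul_eq_mul]
    linear_combination inForestWeight w F * hcard
  · simp [ofProp, hc]

lemma trace_lap_mul_Qmat (hw : ∀ a b, 0 ≤ w a b) (hloop : ∀ a, w a a = 0) (k : ℕ) :
    Matrix.trace (lap w * Qmat w k) = ((k : ℝ) + 1) * sigmaW w (k + 1) := by
  have := sum_Qmat_diag_add (w := w) (k + 1)
  rw [lap_mul_Qmat hw hloop, Matrix.trace_sub, Matrix.trace_smul, Matrix.trace_one,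
    Fintype.card_fin, Matrix.trace]
  push_cast at this ⊢
  simp only [Matrix.diag_apply, smul_eq_mul]
  linarith

lemma arcCount_eq_zero_iff : arcCount F = 0 ↔ F = fun _ => none := by
  simp [arcCount, Finset.filter_eq_empty_iff, funext_iff]

lemma inForestWeight_none : inForestWeight w (fun _ : Fin n => none) = 1 := by
  have acyclic : ∀ v, ¬ Relation.TransGen (Step fun _ : Fin n => none) v v := fun v hv => by
    obtain ⟨_, hv, -⟩ := Relation.TransGen.head'_iff.mp hv
    cases hv
  simp [inForestWeight, IsInForest, acyclic, forestWeight]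

lemma sigmaW_zero : sigmaW w 0 = 1 := by
  simp [sigmaW_eq_sum, arcCount_eq_zero_iff, ofProp, inForestWeight_none]

lemma Qmat_zero : Qmat w 0 = 1 := by
  ext i j
  have hroot (F : Fin n → Option (Fin n)) :
      (F = fun _ => none) ∧ InTreeOf F i j ↔ (F = fun _ => none) ∧ i = j :=
    and_congr_right fun hF => hF ▸ inTreeOf_self_iff rfl
  simp [Qmat_apply_eq_sum, arcCount_eq_zero_iff, ofProp, inForestWeight_none, Matrix.one_apply,
    hroot, ite_and]

end Counting

/-- Chebotarev–Agaev recursion. With `Q 0 = I`,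
`σ_{k+1} = tr(L Q_k)/(k+1)` and `Q_{k+1} = -L Q_k + σ_{k+1} I`, the quantities `σ_k` and
`Q_k` are the total forest weights `sigmaW` and forest-weight matrices `Qmat`. -/
theorem forest_recursion {n : ℕ} (w : Matrix (Fin n) (Fin n) ℝ)
    (hw : ∀ i j, 0 ≤ w i j) (hloop : ∀ i, w i i = 0)
    (s : ℕ → ℝ) (Q : ℕ → Matrix (Fin n) (Fin n) ℝ)
    (hQ0 : Q 0 = 1) (hs0 : s 0 = 1)
    (hs : ∀ k : ℕ, s (k + 1) = Matrix.trace (lap w * Q k) / (k + 1))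
    (hQ : ∀ k : ℕ, Q (k + 1) = -(lap w * Q k) + s (k + 1) • (1 : Matrix (Fin n) (Fin n) ℝ)) :
    (∀ k, s k = sigmaW w k) ∧ ∀ k, Q k = Qmat w k := by
  have both : ∀ k, s k = sigmaW w k ∧ Q k = Qmat w k := by
    intro k
    induction k with
    | zero => exact ⟨hs0.trans sigmaW_zero.symm, hQ0.trans Qmat_zero.symm⟩
    | succ k ih =>
      have hsk : s (k + 1) = sigmaW w (k + 1) := by
        rw [hs k, ih.2, trace_lap_mul_Qmat hw hloop, mul_div_cancel_left₀ _ (by positivity)]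
      refine ⟨hsk, ?_⟩
      rw [hQ k, ih.2, hsk, lap_mul_Qmat hw hloop]
      abel
  exact ⟨fun k => (both k).1, fun k => (both k).2⟩

end MFPT
end

section
/- (Markov chain tree theorem) For an ergodic Markov chain with irreducible stochastic transition matrix T and corresponding weighted digraph G (arc (i,j) has weight t_{ij} for i ≠ j), the stationary probability of state j equals q_j / Σ_{k=1}^n q_k, where q_j is the total weight of spanning trees of G converging to j. -/
open scoped Classical
open Finset Matrix

/-! Both `π` and the vector `q` of tree weights are left fixed vectors of `T`. For `q`, the sums
`∑ i, q i * T i j` and `∑ k, q j * T j k` both enumerate, with weight `∏ v, T v (G v)`, the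
maps `G` whose orbits all pass through `j`: such a map is a tree converging to `j` plus one arc
leaving `j`, and also a tree converging to the unique cycle vertex `i` with `G i = j` plus the
arc `i → j`. Irreducibility makes every `q j` positive and, by the maximum principle, the space
of left fixed vectors one-dimensional, so `π` is the normalisation of `q`. -/

open Module LinearMap

namespace MFPT

variable {n : ℕ}

section FunctionalGraph

variable {α : Type*} {G : α → α} {r : α}

/-- Every orbit of `G` passes through `r`; for finite `α`, `r` lies on the unique cycle of the
functional graph of `G`. -/
def AllReach (G : α → α) (r : α) : Prop := ∀ v, ∃ t, G^[t] v = r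

theorem AllReach.apply (h : AllReach G r) : AllReach G (G r) := fun v => by
  obtain ⟨t, ht⟩ := h v
  exact ⟨t + 1, by rw [Function.iterate_succ_apply', ht]⟩

theorem AllReach.exists_apply_eq (h : AllReach G r) : ∃ i, G i = r ∧ AllReach G i := by
  obtain ⟨t, ht⟩ := h (G r)
  refine ⟨G^[t] r, ?_, fun v => ?_⟩
  · rw [← Function.iterate_succ_apply' G, Function.iterate_succ_apply, ht]
  obtain ⟨s, hs⟩ := h v
  exact ⟨t + s, by rw [Function.iterate_add_apply, hs]⟩

theorem AllReach.injective_apply {i₁ i₂ : α} (h₁ : AllReach G i₁) (h₂ : AllReach G i₂)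
    (h : G i₁ = G i₂) : i₁ = i₂ := by
  obtain ⟨a, ha⟩ := h₁ (G i₁)
  obtain ⟨b, hb⟩ := h₂ (G i₁)
  calc i₁ = G^[a] (G (G^[b] (G i₁))) := by rw [hb, ← h, ha]
    _ = G^[b] (G (G^[a] (G i₁))) := by
      simp only [← Function.iterate_succ_apply' G, ← Function.iterate_add_apply]
      rw [Nat.add_succ, Nat.add_succ, Nat.add_comm]
    _ = i₂ := by rw [ha, hb]

end FunctionalGraph

theorem not_transGen_self_of_lt {α : Type*} {R : α → α → Prop} (d : α → ℕ)
    (hd : ∀ a b, R a b → d b < d a) (v : α) : ¬ Relation.TransGen R v v := by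
  have key : ∀ a b, Relation.TransGen R a b → d b < d a := fun a b h => by
    induction h with
    | single h => exact hd _ _ h
    | tail _ h ih => exact (hd _ _ h).trans ih
  exact fun h => lt_irrefl _ (key v v h)

section Forest

variable {w : Matrix (Fin n) (Fin n) ℝ} {F : Fin n → Option (Fin n)} {G : Fin n → Fin n}
  {r : Fin n}

def cutAt (G : Fin n → Fin n) (r : Fin n) : Fin n → Option (Fin n) :=
  fun v => if v = r then none else some (G v)

theorem cutAt_eq_some {a b : Fin n} : cutAt G r a = some b ↔ a ≠ r ∧ G a = b := by
  unfold cutAt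
  split_ifs with h <;> simp [h]

theorem arcCount_cutAt : arcCount (cutAt G r) = n - 1 := by
  have : (univ.filter fun v => (cutAt G r v).isSome) = univ.erase r := by
    ext v
    by_cases h : v = r <;> simp [cutAt, h]
  rw [arcCount, this, card_erase_of_mem (mem_univ r), card_univ, Fintype.card_fin]

theorem forestWeight_cutAt_mul : forestWeight w (cutAt G r) * w r (G r) = ∏ v, w v (G v) := by
  have hr := prod_ite_eq' univ r fun v => w v (G v)
  rw [if_pos (mem_univ r)] at hr
  rw [forestWeight, ← hr, ← prod_mul_distrib]
  refine prod_congr rfl fun v _ => ?_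
  by_cases h : v = r <;> simp [cutAt, h]

theorem eq_of_arcCount_eq_of_eq_none (hc : arcCount F = n - 1) (hr : F r = none) {v : Fin n}
    (hv : F v = none) : v = r := by
  have hroots : #(univ.filter fun v => ¬ (F v).isSome) ≤ 1 := by
    have := card_filter_add_card_filter_not (s := univ) (p := fun v => (F v).isSome)
    rw [card_univ, Fintype.card_fin, ← arcCount] at this
    omega
  exact card_le_one.mp hroots v (by simp [hv]) r (by simp [hr])

theorem cutAt_getD (hr : F r = none) (hroot : ∀ v, F v = none → v = r) (k : Fin n) :
    cutAt (fun v => (F v).getD k) r = F := by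
  funext v
  by_cases h : v = r
  · simp [cutAt, h, hr]
  · cases hv : F v with
    | none => exact absurd (hroot v hv) h
    | some u => simp [cutAt, h, hv]

theorem forestWeight_pos (hF : IsInForest w F) : 0 < forestWeight w F := by
  refine prod_pos fun v _ => ?_
  cases hv : F v with
  | none => exact one_pos
  | some u => exact (hF.1 v u hv).2

theorem IsInForest.exists_root (hF : IsInForest w F) (v : Fin n) :
    ∃ s, Relation.ReflTransGen (Step F) v s ∧ F s = none := by
  have hwf : WellFounded (Relation.TransGen (flip (Step F))) := by
    have : IsTrans (Fin n) (Relation.TransGen (flip (Step F))) :=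
      ⟨fun _ _ _ => Relation.TransGen.trans⟩
    have : Std.Irrefl (Relation.TransGen (flip (Step F))) :=
      ⟨fun a h => hF.2 a (Relation.transGen_swap.mp h)⟩
    exact Finite.wellFounded_of_trans_of_irrefl _
  induction v using (Subrelation.wf Relation.TransGen.single hwf).induction with
  | _ v ih =>
    cases hv : F v with
    | none => exact ⟨v, .refl, hv⟩
    | some u =>
      obtain ⟨s, hs, hsr⟩ := ih u hv
      exact ⟨s, .head hv hs, hsr⟩

theorem exists_iterate_of_reflTransGen_cutAt {a b : Fin n}
    (h : Relation.ReflTransGen (Step (cutAt G r)) a b) : ∃ t, G^[t] a = b := by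
  induction h with
  | refl => exact ⟨0, rfl⟩
  | tail _ hbc ih =>
    obtain ⟨t, rfl⟩ := ih
    exact ⟨t + 1, by rw [Function.iterate_succ_apply', (cutAt_eq_some.mp hbc).2]⟩

theorem IsInForest.allReach (hF : IsInForest w (cutAt G r)) : AllReach G r := fun v => by
  obtain ⟨s, hs, hsr⟩ := hF.exists_root v
  obtain rfl : s = r := by by_contra h; simp [cutAt, h] at hsr
  exact exists_iterate_of_reflTransGen_cutAt hs

theorem AllReach.isInForest_cutAt (h : AllReach G r) (hw : ∀ v, v ≠ r → 0 < w v (G v)) :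
    IsInForest w (cutAt G r) := by
  let d v := Nat.find (h v)
  have hd : ∀ a b, Step (cutAt G r) a b → d b < d a := by
    intro a b hab
    obtain ⟨har, rfl⟩ := cutAt_eq_some.mp hab
    obtain ⟨m, hm⟩ : ∃ m, d a = m + 1 :=
      Nat.exists_eq_succ_of_ne_zero fun h0 => har ((Nat.find_eq_zero (h a)).mp h0)
    have : G^[m] (G a) = r := by
      rw [← Function.iterate_succ_apply, Nat.succ_eq_add_one, ← hm]
      exact Nat.find_spec (h a)
    exact (Nat.find_min' (h (G a)) this).trans_lt (by omega)
  refine ⟨fun v u hvu => ?_, not_transGen_self_of_lt d hd⟩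
  obtain ⟨hvr, rfl⟩ := cutAt_eq_some.mp hvu
  refine ⟨fun hfix => hvr ?_, hw v hvr⟩
  obtain ⟨t, ht⟩ := h v
  rwa [Function.iterate_fixed hfix.symm] at ht

end Forest

section TreeWeight

variable {w : Matrix (Fin n) (Fin n) ℝ}

/-- Appending the arc `r → k` to a tree converging to `r` is a bijection onto the maps `G` with
`G r = k` whose cut at `r` is an in-forest. -/
theorem treeWeight_mul_eq_sum (r k : Fin n) :
    treeWeight w r * w r k =
      ∑ G : Fin n → Fin n,
        if IsInForest w (cutAt G r) ∧ G r = k then ∏ v, w v (G v) else 0 := by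
  rw [treeWeight, sum_mul]
  simp only [ite_mul, zero_mul]
  rw [← sum_filter, ← sum_filter]
  have hcut : ∀ F : Fin n → Option (Fin n), arcCount F = n - 1 → F r = none →
      cutAt (fun v => (F v).getD k) r = F := fun F hc hr =>
    cutAt_getD hr (fun _ => eq_of_arcCount_eq_of_eq_none hc hr) k
  refine sum_nbij' (fun F v => (F v).getD k) (fun G => cutAt G r) ?_ ?_ ?_ ?_ ?_ <;>
    simp only [mem_filter, mem_univ, true_and]
  · rintro F ⟨hF, hc, hr⟩
    exact ⟨by rwa [hcut F hc hr], by simp [hr]⟩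
  · rintro G ⟨hF, -⟩
    exact ⟨hF, arcCount_cutAt, by simp [cutAt]⟩
  · rintro F ⟨-, hc, hr⟩
    exact hcut F hc hr
  · rintro G ⟨-, rfl⟩
    funext v
    by_cases h : v = r <;> simp [cutAt, h]
  · rintro F ⟨-, hc, hr⟩
    rw [← forestWeight_cutAt_mul, hcut F hc hr]
    simp [hr]

/-- If all arcs of `G` have positive weight, the cut at `i` is an in-forest iff `i` is on the
cycle of `G`, and exactly one cycle vertex is mapped to `j` when `j` itself is on the cycle. -/
theorem sum_ite_isInForest_cutAt_apply_eq (hw : ∀ a b, 0 ≤ w a b) (G : Fin n → Fin n)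
    (j : Fin n) :
    ∑ i, (if IsInForest w (cutAt G i) ∧ G i = j then ∏ v, w v (G v) else 0) =
      if IsInForest w (cutAt G j) then ∏ v, w v (G v) else 0 := by
  by_cases hpos : ∀ v, 0 < w v (G v)
  swap
  · obtain ⟨v, hv⟩ := not_forall.mp hpos
    rw [not_lt] at hv
    have : ∏ v, w v (G v) = 0 := prod_eq_zero (mem_univ v) (le_antisymm hv (hw _ _))
    simp [this]
  have hiff : ∀ r, IsInForest w (cutAt G r) ↔ AllReach G r := fun r =>
    ⟨IsInForest.allReach, fun h => h.isInForest_cutAt fun v _ => hpos v⟩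
  simp only [hiff]
  split_ifs with hj
  · obtain ⟨i, hi, hreach⟩ := hj.exists_apply_eq
    rw [sum_eq_single i (fun b _ hb => if_neg fun ⟨hb', hbj⟩ =>
      hb (hb'.injective_apply hreach (hbj.trans hi.symm))) (by simp), if_pos ⟨hreach, hi⟩]
  · exact sum_eq_zero fun i _ => if_neg fun ⟨hi, hij⟩ => hj (hij ▸ hi.apply)

/-- Both sides are the total weight of the maps `G` whose orbits all pass through `j`. -/
theorem sum_treeWeight_mul (hw : ∀ a b, 0 ≤ w a b) (j : Fin n) :
    ∑ i, treeWeight w i * w i j = treeWeight w j * ∑ k, w j k := by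
  calc ∑ i, treeWeight w i * w i j
      = ∑ G : Fin n → Fin n, ∑ i,
          if IsInForest w (cutAt G i) ∧ G i = j then ∏ v, w v (G v) else 0 := by
        simp only [treeWeight_mul_eq_sum]
        exact sum_comm
    _ = ∑ G : Fin n → Fin n, if IsInForest w (cutAt G j) then ∏ v, w v (G v) else 0 :=
        sum_congr rfl fun G _ => sum_ite_isInForest_cutAt_apply_eq hw G j
    _ = ∑ k, ∑ G : Fin n → Fin n,
          if IsInForest w (cutAt G j) ∧ G j = k then ∏ v, w v (G v) else 0 := by
        rw [sum_comm]
        refine sum_congr rfl fun G _ => ?_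
        split_ifs <;> simp [*]
    _ = treeWeight w j * ∑ k, w j k := by
        simp only [mul_sum, treeWeight_mul_eq_sum]

end TreeWeight

theorem finrank_ker_vecMulLinear {K m : Type*} [Field K] [Fintype m] (A : Matrix m m K) :
    finrank K (ker A.vecMulLinear) = finrank K (ker A.mulVecLin) := by
  have h := A.mulVecLin.finrank_range_add_finrank_ker
  have hT := Aᵀ.mulVecLin.finrank_range_add_finrank_ker
  have hr : Aᵀ.rank = A.rank := rank_transpose A
  rw [Matrix.rank, Matrix.rank] at hr
  rw [mulVecLin_transpose] at hT hr
  omega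

section Stochastic

variable {T : Matrix (Fin n) (Fin n) ℝ}

theorem exists_pos_of_pow_succ_apply_pos (hT : ∀ i j, 0 ≤ T i j) {m : ℕ} {v j : Fin n}
    (h : 0 < (T ^ (m + 1)) v j) : ∃ u, 0 < T v u ∧ 0 < (T ^ m) u j := by
  rw [pow_succ', mul_apply, sum_pos_iff_of_nonneg fun u _ =>
    mul_nonneg (hT v u) (pow_apply_nonneg hT m u j)] at h
  obtain ⟨u, -, hu⟩ := h
  exact ⟨u, pos_of_mul_pos_left hu (pow_apply_nonneg hT m u j),
    pos_of_mul_pos_right hu (hT v u)⟩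

theorem mem_of_pow_apply_pos (hT : ∀ i j, 0 ≤ T i j) {S : Set (Fin n)}
    (hS : ∀ y z, y ∈ S → 0 < T y z → z ∈ S) {k : ℕ} {y z : Fin n} (hy : y ∈ S)
    (h : 0 < (T ^ k) y z) : z ∈ S := by
  induction k generalizing y with
  | zero =>
    obtain rfl : y = z := by by_contra hyz; simp [one_apply_ne hyz] at h
    exact hy
  | succ k ih =>
    obtain ⟨u, hyu, huz⟩ := exists_pos_of_pow_succ_apply_pos hT h
    exact ih (hS y u hy hyu) huz

/-- Following an arc that strictly decreases the distance to `j` gives a map whose orbits all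
reach `j`. -/
theorem exists_allReach_of_isIrreducible (hT : ∀ i j, 0 ≤ T i j) (hIrr : IsIrreducible T)
    (j : Fin n) : ∃ G : Fin n → Fin n, AllReach G j ∧ ∀ v, v ≠ j → 0 < T v (G v) := by
  let d v := Nat.find (hIrr v j)
  have hstep : ∀ v, v ≠ j → ∃ u, 0 < T v u ∧ d u < d v := by
    intro v hv
    obtain ⟨m, hm⟩ : ∃ m, d v = m + 1 := Nat.exists_eq_succ_of_ne_zero fun h0 => by
      simpa [one_apply_ne hv] using (Nat.find_eq_zero (hIrr v j)).mp h0
    have hpow : 0 < (T ^ (m + 1)) v j := hm ▸ Nat.find_spec (hIrr v j)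
    obtain ⟨u, hvu, huj⟩ := exists_pos_of_pow_succ_apply_pos hT hpow
    exact ⟨u, hvu, (Nat.find_min' (hIrr u j) huj).trans_lt (by omega)⟩
  choose! G hG using hstep
  refine ⟨G, fun v => ?_, fun v hv => (hG v hv).1⟩
  induction v using (measure d).wf.induction with
  | _ v ih =>
    by_cases hv : v = j
    · exact ⟨0, hv⟩
    · obtain ⟨t, ht⟩ := ih (G v) (hG v hv).2
      exact ⟨t + 1, by rwa [Function.iterate_succ_apply]⟩

theorem treeWeight_pos (hT : ∀ i j, 0 ≤ T i j) (hIrr : IsIrreducible T) (j : Fin n) :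
    0 < treeWeight T j := by
  obtain ⟨G, hG, hpos⟩ := exists_allReach_of_isIrreducible hT hIrr j
  have hF : IsInForest T (cutAt G j) := hG.isInForest_cutAt hpos
  refine sum_pos' (fun F _ => ?_) ⟨cutAt G j, mem_univ _, ?_⟩
  · split_ifs with h
    exacts [(forestWeight_pos h.1).le, le_rfl]
  · rw [if_pos ⟨hF, arcCount_cutAt, by simp [cutAt]⟩]
    exact forestWeight_pos hF

/-- Maximum principle: a harmonic vector attains its maximum along every arc leaving a maximiser,
hence everywhere. -/
theorem apply_eq_of_mulVec_eq_self (hT : IsStochastic T) (hIrr : IsIrreducible T)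
    {v : Fin n → ℝ} (hv : T *ᵥ v = v) (a b : Fin n) : v a = v b := by
  have : Nonempty (Fin n) := ⟨a⟩
  obtain ⟨x, hx⟩ := Finite.exists_max v
  have hclosed : ∀ y z, y ∈ {y | v y = v x} → 0 < T y z → z ∈ {y | v y = v x} := by
    intro y z hy hyz
    have hzero : ∑ k, T y k * (v x - v k) = 0 := by
      simp only [mul_sub, sum_sub_distrib, ← sum_mul, hT.2 y, one_mul]
      rw [← hy]
      exact sub_eq_zero.mpr (congrFun hv y).symm
    have := (sum_eq_zero_iff_of_nonneg fun k _ =>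
      mul_nonneg (hT.1 y k) (sub_nonneg.mpr (hx k))).mp hzero z (mem_univ z)
    exact (sub_eq_zero.mp ((mul_eq_zero.mp this).resolve_left hyz.ne')).symm
  have hall : ∀ z, v z = v x := fun z => by
    obtain ⟨k, hk⟩ := hIrr x z
    exact mem_of_pow_apply_pos hT.1 hclosed rfl hk
  rw [hall a, hall b]

theorem treeWeight_vecMul (hT : IsStochastic T) : treeWeight T ᵥ* T = treeWeight T :=
  funext fun j => by rw [← mul_one (treeWeight T j), ← hT.2 j, ← sum_treeWeight_mul hT.1]; rfl

theorem finrank_ker_mulVecLin_sub_one_le (hT : IsStochastic T) (hIrr : IsIrreducible T) :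
    finrank ℝ (ker (T - 1).mulVecLin) ≤ 1 := by
  have hle : ker (T - 1).mulVecLin ≤ ℝ ∙ (1 : Fin n → ℝ) := fun v hv => by
    rw [mem_ker, mulVecLin_apply, sub_mulVec, one_mulVec, sub_eq_zero] at hv
    refine Submodule.mem_span_singleton.mpr ?_
    rcases isEmpty_or_nonempty (Fin n) with h | ⟨⟨a⟩⟩
    · exact ⟨0, Subsingleton.elim _ _⟩
    · exact ⟨v a, funext fun b => by simp [apply_eq_of_mulVec_eq_self hT hIrr hv a b]⟩
  exact (Submodule.finrank_mono hle).trans ((finrank_span_le_card _).trans (by simp))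

theorem exists_smul_eq_of_vecMul_eq_self (hT : IsStochastic T) (hIrr : IsIrreducible T)
    {p q : Fin n → ℝ} (hp : p ᵥ* T = p) (hp0 : p ≠ 0) (hq : q ᵥ* T = q) :
    ∃ c : ℝ, c • p = q := by
  have hmem (x : Fin n → ℝ) (hx : x ᵥ* T = x) : x ∈ ker (T - 1).vecMulLinear := by
    rw [mem_ker, vecMulLinear_apply, vecMul_sub, vecMul_one, hx, sub_self]
  have hspan : ℝ ∙ p = ker (T - 1).vecMulLinear := by
    refine Submodule.eq_of_le_of_finrank_le ((Submodule.span_singleton_le_iff_mem _ _).mpr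
      (hmem p hp)) ?_
    rw [finrank_span_singleton hp0, finrank_ker_vecMulLinear]
    exact finrank_ker_mulVecLin_sub_one_le hT hIrr
  exact Submodule.mem_span_singleton.mp (hspan ▸ hmem q hq)

end Stochastic

theorem markov_chain_tree_theorem_general {n : ℕ} (T : Matrix (Fin n) (Fin n) ℝ)
    (hS : IsStochastic T) (hIrr : IsIrreducible T)
    (π : Fin n → ℝ) (hπ : IsStationary T π) :
    ∀ j, π j = treeWeight T j / ∑ k, treeWeight T k := by
  intro j
  have hq := treeWeight_pos hS.1 hIrr
  have hq0 : treeWeight T ≠ 0 := fun h => (hq j).ne' (congrFun h j)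
  obtain ⟨c, rfl⟩ := exists_smul_eq_of_vecMul_eq_self hS hIrr (treeWeight_vecMul hS) hq0
    (funext hπ.2.2)
  have hc : c * ∑ k, treeWeight T k = 1 := by rw [mul_sum]; exact hπ.2.1
  rw [eq_div_iff (sum_pos (fun k _ => hq k) ⟨j, mem_univ j⟩).ne', Pi.smul_apply, smul_eq_mul,
    mul_right_comm, hc, one_mul]

/-- Markov chain tree theorem. The stationary probability of state `j`
equals `q_j / Σ_k q_k`, where `q_j` is the total weight of spanning trees of the chain's
digraph converging to `j`. -/
theorem markov_chain_tree_theorem {n : ℕ} (T : Matrix (Fin n) (Fin n) ℝ)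
    (hS : IsStochastic T) (hIrr : IsIrreducible T) (hErg : IsErgodic T)
    (π : Fin n → ℝ) (hπ : IsStationary T π) :
    ∀ j, π j = treeWeight T j / ∑ k, treeWeight T k :=
  markov_chain_tree_theorem_general T hS hIrr π hπ

end MFPT
end
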